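/- arXiv:2405.16564 — 9 statements merged into one kernel-verified Lean document; each statement's English description precedes it below -/
import Mathlib

section
/- Let α, c₁, c₂, r be positive real numbers. If a positive real number x satisfies x ≤ c₁ · x^(α/(2(1+α))) · r + c₂, then x ≤ (c₁ r)^((2α+2)/(α+2)) + 2 c₂. -/
/-!
Write `β = α / (2(1+α)) ∈ (0, 1/2]` and `A = (c₁ r)^((2α+2)/(α+2))`, so that `c₁ r = A^(1-β)`.
Weighted AM-GM bounds `A^(1-β) x^β` by `(1-β) A + β x`; the term `β x` is absorbed into the
left-hand side, leaving `x ≤ A + c₂ / (1-β) ≤ A + 2 c₂`.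
-/

open Real

theorem le_add_div_of_le_rpow_mul_rpow_add {A c x β : ℝ} (hA : 0 ≤ A) (hx : 0 ≤ x)
    (hβ₀ : 0 ≤ β) (hβ₁ : β < 1) (h : x ≤ A ^ (1 - β) * x ^ β + c) :
    x ≤ A + c / (1 - β) := by
  have amgm : A ^ (1 - β) * x ^ β ≤ (1 - β) * A + β * x :=
    geom_mean_le_arith_mean2_weighted (by linarith) hβ₀ hA hx (by ring)
  have hβ : 0 < 1 - β := by linarith
  rw [← sub_le_iff_le_add', le_div_iff₀ hβ]
  linarith

/-- Lemma C.4: if a positive real `x` satisfies the transcendental inequality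
`x ≤ c₁ * x ^ (α / (2 * (1 + α))) * r + c₂`, then
`x ≤ (c₁ * r) ^ ((2 * α + 2) / (α + 2)) + 2 * c₂`. -/
theorem stmt0 (α c₁ c₂ r x : ℝ) (hα : 0 < α) (hc₁ : 0 < c₁) (hc₂ : 0 < c₂) (hr : 0 < r)
    (hx : 0 < x) (h : x ≤ c₁ * x ^ (α / (2 * (1 + α))) * r + c₂) :
    x ≤ (c₁ * r) ^ ((2 * α + 2) / (α + 2)) + 2 * c₂ := by
  set β := α / (2 * (1 + α))
  set A := (c₁ * r) ^ ((2 * α + 2) / (α + 2))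
  have hβ₀ : 0 < β := by positivity
  have hβ_le_half : β ≤ 1 / 2 := by
    rw [div_le_iff₀ (by positivity)]
    linarith
  have hA : A ^ (1 - β) = c₁ * r := by
    have hexp : (2 * α + 2) / (α + 2) * (1 - β) = 1 := by
      simp only [β]
      field_simp
      ring
    rw [← rpow_mul (by positivity), hexp, rpow_one]
  have key : x ≤ A + c₂ / (1 - β) :=
    le_add_div_of_le_rpow_mul_rpow_add (by positivity) hx.le hβ₀.le (by linarith)
      (by rw [hA]; linarith)
  have hc₂_div : c₂ / (1 - β) ≤ 2 * c₂ := by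
    rw [div_le_iff₀ (by linarith)]
    nlinarith
  linarith
end

section
/- For all positive real numbers α, c₁, c₂, r: (c₁ r)^((2α+2)/(α+2)) + c₂ ≥ c₁ · ((c₁ r)^((2α+2)/(α+2)) + 2 c₂)^(α/(2(1+α))) · r. -/
/-!
Write `t = c₁ r`, `p = (2α+2)/(α+2)` and `q = α/(2(1+α))`. Since `p (1 - q) = 1` we have
`t = (t^p)^(1-q)`, so the right-hand side is the weighted geometric mean
`(t^p)^(1-q) (t^p + 2c₂)^q`, which by weighted AM-GM is at most `t^p + 2q c₂ ≤ t^p + c₂`.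
-/

open Real

lemma rpow_one_sub_mul_add_rpow_le {x c q : ℝ} (hx : 0 ≤ x) (hc : 0 ≤ c) (hq : 0 ≤ q)
    (h2q : 2 * q ≤ 1) :
    x ^ (1 - q) * (x + 2 * c) ^ q ≤ x + c :=
  calc x ^ (1 - q) * (x + 2 * c) ^ q
      ≤ (1 - q) * x + q * (x + 2 * c) :=
        geom_mean_le_arith_mean2_weighted (by linarith) hq hx (by positivity) (by ring)
    _ = x + 2 * q * c := by ring
    _ ≤ x + c := by nlinarith

lemma div_mul_one_sub_div_eq_one {α : ℝ} (hα : 0 < α) :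
    (2 * α + 2) / (α + 2) * (1 - α / (2 * (1 + α))) = 1 := by
  field_simp
  ring

/-- The key ("original") inequality verified in the proof of Lemma C.4. -/
theorem stmt2 (α c₁ c₂ r : ℝ) (hα : 0 < α) (hc₁ : 0 < c₁) (hc₂ : 0 < c₂) (hr : 0 < r) :
    (c₁ * r) ^ ((2 * α + 2) / (α + 2)) + c₂ ≥
      c₁ * ((c₁ * r) ^ ((2 * α + 2) / (α + 2)) + 2 * c₂) ^ (α / (2 * (1 + α))) * r := by
  set t := c₁ * r
  set p := (2 * α + 2) / (α + 2)
  set q := α / (2 * (1 + α))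
  have ht : 0 ≤ t := by positivity
  have hq : 0 ≤ q := by positivity
  have h2q : 2 * q ≤ 1 := by
    rw [show 2 * q = α / (1 + α) by simp only [q]; field_simp, div_le_one (by linarith)]
    linarith
  have ht_eq : (t ^ p) ^ (1 - q) = t := by
    rw [← rpow_mul ht, div_mul_one_sub_div_eq_one hα, rpow_one]
  calc c₁ * (t ^ p + 2 * c₂) ^ q * r
      = (t ^ p) ^ (1 - q) * (t ^ p + 2 * c₂) ^ q := by rw [ht_eq]; ring
    _ ≤ t ^ p + c₂ := rpow_one_sub_mul_add_rpow_le (by positivity) hc₂.le hq h2q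
end

section
/- Let m₁, m₂ be positive integers with m₂ ≥ 2 m₁ + 1, and let c₁, c₂, r be positive real numbers. Setting a = (c₁ r)^(m₂/(m₂ − m₁)), we have (a + c₂)^(m₂) ≥ c₁^(m₂) · (a + 2 c₂)^(m₁) · r^(m₂). -/
/-! With `a = (c₁ r) ^ (m₂ / (m₂ - m₁))` we have `a ^ (m₂ - m₁) = (c₁ r) ^ m₂`, so the right-hand
side is `(a (a + 2 c₂)) ^ m₁ · a ^ (m₂ - 2 m₁)`. Now `a (a + 2 c₂) ≤ (a + c₂) ^ 2` and
`a ≤ a + c₂` bound it factor by factor by `(a + c₂) ^ m₂`. -/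

section OrderedRing

variable {R : Type*} [CommRing R] [LinearOrder R] [IsStrictOrderedRing R]

lemma mul_add_two_mul_le_add_sq (a c : R) : a * (a + 2 * c) ≤ (a + c) ^ 2 := by
  nlinarith [sq_nonneg c]

lemma pow_sub_mul_pow_add_two_mul_le {a c : R} (ha : 0 ≤ a) (hc : 0 ≤ c) {k n : ℕ}
    (hkn : 2 * k ≤ n) : a ^ (n - k) * (a + 2 * c) ^ k ≤ (a + c) ^ n :=
  calc a ^ (n - k) * (a + 2 * c) ^ k = (a * (a + 2 * c)) ^ k * a ^ (n - 2 * k) := by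
        rw [mul_pow, show n - k = k + (n - 2 * k) by omega, pow_add]; ring
    _ ≤ ((a + c) ^ 2) ^ k * (a + c) ^ (n - 2 * k) := by
        gcongr
        · exact mul_add_two_mul_le_add_sq a c
        · linarith
    _ = (a + c) ^ n := by rw [← pow_mul, ← pow_add]; congr 1; omega

end OrderedRing

lemma rpow_div_sub_pow_sub {x : ℝ} (hx : 0 ≤ x) {k n : ℕ} (hkn : k < n) :
    (x ^ ((n : ℝ) / ((n : ℝ) - k))) ^ (n - k) = x ^ n := by
  have hsub : (n : ℝ) - k ≠ 0 := sub_ne_zero.mpr (by exact_mod_cast hkn.ne')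
  rw [← Real.rpow_natCast _ (n - k), ← Real.rpow_mul hx, ← Real.rpow_natCast x n,
    Nat.cast_sub hkn.le, div_mul_cancel₀ _ hsub]

theorem stmt3_general (m₁ m₂ : ℕ) (hm : 2 * m₁ + 1 ≤ m₂) (c₁ c₂ r : ℝ)
    (hc₁ : 0 < c₁) (hc₂ : 0 < c₂) (hr : 0 < r) :
    ((c₁ * r) ^ ((m₂ : ℝ) / ((m₂ : ℝ) - (m₁ : ℝ))) + c₂) ^ m₂ ≥
      c₁ ^ m₂ * ((c₁ * r) ^ ((m₂ : ℝ) / ((m₂ : ℝ) - (m₁ : ℝ))) + 2 * c₂) ^ m₁ * r ^ m₂ := by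
  have hcr : 0 < c₁ * r := mul_pos hc₁ hr
  rw [ge_iff_le, mul_right_comm, ← mul_pow, ← rpow_div_sub_pow_sub hcr.le (by omega : m₁ < m₂)]
  exact pow_sub_mul_pow_add_two_mul_le (Real.rpow_nonneg hcr.le _) hc₂.le (by omega)

/-- The rational-exponent polynomial inequality from the proof of Lemma C.4:
for positive integers `m₁, m₂` with `m₂ ≥ 2 m₁ + 1` and positive reals `c₁, c₂, r`,
setting `a = (c₁ r) ^ (m₂ / (m₂ - m₁))`, we have
`(a + c₂) ^ m₂ ≥ c₁ ^ m₂ * (a + 2 c₂) ^ m₁ * r ^ m₂`. -/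
theorem stmt3 (m₁ m₂ : ℕ) (hm₁ : 0 < m₁) (hm : 2 * m₁ + 1 ≤ m₂) (c₁ c₂ r : ℝ)
    (hc₁ : 0 < c₁) (hc₂ : 0 < c₂) (hr : 0 < r) :
    ((c₁ * r) ^ ((m₂ : ℝ) / ((m₂ : ℝ) - (m₁ : ℝ))) + c₂) ^ m₂ ≥
      c₁ ^ m₂ * ((c₁ * r) ^ ((m₂ : ℝ) / ((m₂ : ℝ) - (m₁ : ℝ))) + 2 * c₂) ^ m₁ * r ^ m₂ :=
  stmt3_general m₁ m₂ hm c₁ c₂ r hc₁ hc₂ hr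
end

section
/- For all natural numbers i, m₁, m₂ with i ≤ m₁ and m₂ ≥ 2 m₁ + 1, we have m₂! · i! ≥ m₁! · 2^(m₁ − i) · (i + m₂ − m₁)!. -/
open Nat

/-- Each of the `k` factors `i + j` of `(i + k)! / i!`, doubled, is at most the matching factor
`n + j` of `(n + k)! / n!`. -/
theorem two_pow_mul_factorial_mul_factorial_le {i n : ℕ} :
    ∀ {k : ℕ}, 2 * i + k ≤ n → 2 ^ k * (i + k)! * n ! ≤ (n + k)! * i !
  | 0, _ => by simp [Nat.mul_comm]
  | k + 1, h => by
    have ih := two_pow_mul_factorial_mul_factorial_le (i := i) (n := n) (k := k) (by omega)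
    calc 2 ^ (k + 1) * (i + (k + 1))! * n !
        = (2 * (i + k + 1)) * (2 ^ k * (i + k)! * n !) := by
          rw [← Nat.add_assoc, factorial_succ]; ring
      _ ≤ (n + k + 1) * ((n + k)! * i !) :=
          Nat.mul_le_mul (by omega : 2 * (i + k + 1) ≤ n + k + 1) ih
      _ = (n + (k + 1))! * i ! := by rw [← Nat.add_assoc, factorial_succ]; ring

/-- The combinatorial (multinomial coefficient) inequality from the proof of Lemma C.4:
for naturals `i ≤ m₁` and `m₂ ≥ 2 m₁ + 1`,
`m₂! * i! ≥ m₁! * 2 ^ (m₁ - i) * (i + m₂ - m₁)!`. -/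
theorem stmt4 (i m₁ m₂ : ℕ) (hi : i ≤ m₁) (h : 2 * m₁ + 1 ≤ m₂) :
    m₁.factorial * 2 ^ (m₁ - i) * (i + m₂ - m₁).factorial ≤
      m₂.factorial * i.factorial := by
  have key := two_pow_mul_factorial_mul_factorial_le (i := i) (n := i + m₂ - m₁) (k := m₁ - i)
    (by omega)
  rw [show i + (m₁ - i) = m₁ by omega, show i + m₂ - m₁ + (m₁ - i) = m₂ by omega] at key
  calc m₁ ! * 2 ^ (m₁ - i) * (i + m₂ - m₁)! = 2 ^ (m₁ - i) * m₁ ! * (i + m₂ - m₁)! := by ring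
    _ ≤ m₂ ! * i ! := key
end

section
/- Assume ignorability. Let G : ℝ^p → ℝ^{d×d} be a bounded measurable matrix-valued function such that, almost surely, G(X) satisfies the Penrose equations for Σ₀(X), and let π be a policy such that π(X) lies in the column space of Σ₀(X) almost surely. Then E[(G(X) Z C)ᵀ π(X)] = E[f₀(X)ᵀ π(X)]. -/
/-!
Write `u = Gᵀ π`, a function of `X`. The integrand is `(Zᵀ u(X)) C`, and `Zᵀ u(X)` is
`σ(X, Z)`-measurable, so ignorability lets us replace `C` by `Zᵀ f₀(X)`. Pulling the
`σ(X)`-measurable coefficients out of `E[Z Zᵀ | X] = Σ₀(X)` turns `(Zᵀ u)(Zᵀ f₀)` into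
`uᵀ Σ₀ f₀ = πᵀ G Σ₀ f₀`. Finally, with `π = Σ₀ w` and `Σ₀` symmetric (it is a conditional
covariance), `πᵀ G Σ₀ f₀ = wᵀ Σ₀ G Σ₀ f₀ = wᵀ Σ₀ f₀ = πᵀ f₀` by the first Penrose equation.
-/

open MeasureTheory Matrix

/-- `G` satisfies the four Penrose equations for `S`. -/
def Penrose {d : ℕ} (S G : Matrix (Fin d) (Fin d) ℝ) : Prop :=
  S * G * S = S ∧ G * S * G = G ∧ (S * G)ᵀ = S * G ∧ (G * S)ᵀ = G * S

open scoped ENNReal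

theorem Matrix.vecMul_dotProduct_mulVec_of_mul_mul_self {R n : Type*} [CommSemiring R] [Fintype n]
    {S G : Matrix n n R} (hS : Sᵀ = S) (hSGS : S * G * S = S) {π : n → R}
    (hπ : ∃ w, S *ᵥ w = π) (f : n → R) :
    (π ᵥ* G) ⬝ᵥ (S *ᵥ f) = f ⬝ᵥ π := by
  obtain ⟨w, rfl⟩ := hπ
  rw [← vecMul_transpose, hS, dotProduct_mulVec, vecMul_vecMul, vecMul_vecMul,
    ← Matrix.mul_assoc, hSGS, dotProduct_comm]

section
variable {Ω : Type*} {m m₀ : MeasurableSpace Ω} {μ : Measure Ω}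

theorem mul_ae_eq_condExp_mul {f g h : Ω → ℝ} (hg : StronglyMeasurable[m] g)
    (hgf : Integrable (g * f) μ) (hf : Integrable f μ) (hh : h =ᵐ[μ] μ[f|m]) :
    g * h =ᵐ[μ] μ[g * f|m] :=
  ((ae_eq_refl g).mul hh).trans (condExp_mul_of_stronglyMeasurable_left hg hgf hf).symm

theorem integral_mul_eq_of_ae_eq_condExp (hm : m ≤ m₀) [SigmaFinite (μ.trim hm)]
    {f g h : Ω → ℝ} (hg : StronglyMeasurable[m] g)
    (hgf : Integrable (g * f) μ) (hf : Integrable f μ) (hh : h =ᵐ[μ] μ[f|m]) :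
    ∫ ω, g ω * h ω ∂μ = ∫ ω, g ω * f ω ∂μ :=
  (integral_congr_ae (mul_ae_eq_condExp_mul hg hgf hf hh)).trans (integral_condExp hm)

theorem Integrable.mul_of_ae_eq_condExp {f g h : Ω → ℝ} (hg : StronglyMeasurable[m] g)
    (hgf : Integrable (g * f) μ) (hf : Integrable f μ) (hh : h =ᵐ[μ] μ[f|m]) :
    Integrable (g * h) μ :=
  integrable_condExp.congr (mul_ae_eq_condExp_mul hg hgf hf hh).symm

theorem ae_transpose_eq_of_ae_eq_condExp_mul {ι : Type*} [Countable ι] {Z : Ω → ι → ℝ}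
    {S : Ω → Matrix ι ι ℝ} (hS : ∀ i j, (fun ω => S ω i j) =ᵐ[μ] μ[fun ω => Z ω i * Z ω j|m]) :
    ∀ᵐ ω ∂μ, (S ω)ᵀ = S ω := by
  have hsymm : ∀ᵐ ω ∂μ, ∀ i j, S ω j i = S ω i j := by
    simp only [ae_all_iff]
    intro i j
    filter_upwards [hS i j, hS j i] with ω hij hji
    simp only [hij, hji, mul_comm]
  filter_upwards [hsymm] with ω h
  exact Matrix.ext h

theorem Measurable.dotProduct {ι : Type*} [Fintype ι] {a b : Ω → ι → ℝ} (ha : Measurable[m] a)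
    (hb : Measurable[m] b) : Measurable[m] fun ω => a ω ⬝ᵥ b ω :=
  Finset.measurable_sum _ fun _ _ => ha.eval.mul hb.eval

theorem memLp_top_apply_of_norm_le {ι : Type*} [Fintype ι] {F : Ω → ι → ℝ}
    (hF : Measurable[m₀] F) {M : ℝ} (hM : ∀ ω, ‖F ω‖ ≤ M) (i : ι) :
    MemLp (fun ω => F ω i) ∞ μ :=
  memLp_top_of_bound hF.eval.aestronglyMeasurable M
    (ae_of_all _ fun ω => (norm_le_pi_norm (F ω) i).trans (hM ω))

theorem MemLp.dotProduct {ι : Type*} [Fintype ι] {a b : Ω → ι → ℝ}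
    (ha : ∀ i, MemLp (fun ω => a ω i) ∞ μ) (hb : ∀ i, MemLp (fun ω => b ω i) ∞ μ) :
    MemLp (fun ω => a ω ⬝ᵥ b ω) ∞ μ :=
  memLp_finsetSum _ fun i _ => (hb i).mul' (ha i)

theorem integral_dotProduct_mul_dotProduct_eq_integral_dotProduct_mulVec
    {ι : Type*} [Fintype ι] (hm : m ≤ m₀) [IsFiniteMeasure μ] {Z a b : Ω → ι → ℝ}
    {S : Ω → Matrix ι ι ℝ} (hZ : ∀ i, MemLp (fun ω => Z ω i) ∞ μ)
    (ha : ∀ i, StronglyMeasurable[m] fun ω => a ω i) (ha' : ∀ i, MemLp (fun ω => a ω i) ∞ μ)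
    (hb : ∀ i, StronglyMeasurable[m] fun ω => b ω i) (hb' : ∀ i, MemLp (fun ω => b ω i) ∞ μ)
    (hS : ∀ i j, (fun ω => S ω i j) =ᵐ[μ] μ[fun ω => Z ω i * Z ω j|m]) :
    ∫ ω, (Z ω ⬝ᵥ a ω) * (Z ω ⬝ᵥ b ω) ∂μ = ∫ ω, a ω ⬝ᵥ S ω *ᵥ b ω ∂μ := by
  have hcoef : ∀ i j, StronglyMeasurable[m] fun ω => a ω i * b ω j :=
    fun i j => (ha i).mul (hb j)
  have hZZ : ∀ i j, MemLp (fun ω => Z ω i * Z ω j) ∞ μ := fun i j => (hZ j).mul' (hZ i)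
  have hab : ∀ i j, MemLp (fun ω => a ω i * b ω j) ∞ μ := fun i j => (hb' j).mul' (ha' i)
  have hint : ∀ i j, Integrable (fun ω => a ω i * b ω j * (Z ω i * Z ω j)) μ :=
    fun i j => ((hZZ i j).mul' (hab i j) (r := ∞)).integrable le_top
  calc ∫ ω, (Z ω ⬝ᵥ a ω) * (Z ω ⬝ᵥ b ω) ∂μ
      = ∫ ω, ∑ i, ∑ j, a ω i * b ω j * (Z ω i * Z ω j) ∂μ := by
        congr 1 with ω
        simp only [dotProduct, Finset.sum_mul_sum]
        exact Finset.sum_congr rfl fun i _ => Finset.sum_congr rfl fun j _ => by ring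
    _ = ∑ i, ∑ j, ∫ ω, a ω i * b ω j * (Z ω i * Z ω j) ∂μ := by
        rw [integral_finsetSum _ fun i _ => integrable_finsetSum _ fun j _ => hint i j]
        exact Finset.sum_congr rfl fun i _ => integral_finsetSum _ fun j _ => hint i j
    _ = ∑ i, ∑ j, ∫ ω, a ω i * b ω j * S ω i j ∂μ := by
        refine Finset.sum_congr rfl fun i _ => Finset.sum_congr rfl fun j _ => ?_
        exact (integral_mul_eq_of_ae_eq_condExp hm (hcoef i j) (hint i j)
          ((hZZ i j).integrable le_top) (hS i j)).symm
    _ = ∫ ω, ∑ i, ∑ j, a ω i * b ω j * S ω i j ∂μ := by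
        have hint' : ∀ i j, Integrable (fun ω => a ω i * b ω j * S ω i j) μ := fun i j =>
          Integrable.mul_of_ae_eq_condExp (hcoef i j) (hint i j) ((hZZ i j).integrable le_top)
            (hS i j)
        rw [integral_finsetSum _ fun i _ => integrable_finsetSum _ fun j _ => hint' i j]
        exact Finset.sum_congr rfl fun i _ => (integral_finsetSum _ fun j _ => hint' i j).symm
    _ = ∫ ω, a ω ⬝ᵥ S ω *ᵥ b ω ∂μ := by
        congr 1 with ω
        simp only [dotProduct, mulVec, Finset.mul_sum]
        exact Finset.sum_congr rfl fun i _ => Finset.sum_congr rfl fun j _ => by ring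

end

theorem stmt9_general {Ω : Type*} [MeasurableSpace Ω] (μ : Measure Ω) [IsProbabilityMeasure μ]
    {p d : ℕ} (X : Ω → Fin p → ℝ) (Z Y : Ω → Fin d → ℝ)
    (hX : Measurable X) (hZ : Measurable Z) (hY : Measurable Y)
    (hZb : ∃ M, ∀ ω, ‖Z ω‖ ≤ M) (hYb : ∃ M, ∀ ω, ‖Y ω‖ ≤ M)
    (C : Ω → ℝ) (hC : ∀ ω, C ω = Z ω ⬝ᵥ Y ω)
    (f₀ : (Fin p → ℝ) → Fin d → ℝ) (hf₀ : Measurable f₀) (hf₀b : ∃ M, ∀ x, ‖f₀ x‖ ≤ M)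
    (S₀ : (Fin p → ℝ) → Matrix (Fin d) (Fin d) ℝ)
    (hS₀ce : ∀ i j, (fun ω => S₀ (X ω) i j) =ᵐ[μ]
      μ[(fun ω => Z ω i * Z ω j) | MeasurableSpace.comap X inferInstance])
    (hIgn : (fun ω => Z ω ⬝ᵥ f₀ (X ω)) =ᵐ[μ]
      μ[C | MeasurableSpace.comap (fun ω => (X ω, Z ω)) inferInstance])
    (G : (Fin p → ℝ) → Matrix (Fin d) (Fin d) ℝ)
    (hG : ∀ i j, Measurable fun x => G x i j)
    (hGb : ∃ M, ∀ x i j, |G x i j| ≤ M)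
    (hPen : ∀ᵐ ω ∂μ, Penrose (S₀ (X ω)) (G (X ω)))
    (π : (Fin p → ℝ) → Fin d → ℝ) (hπ : Measurable π) (hπb : ∃ M, ∀ x, ‖π x‖ ≤ M)
    (hπcol : ∀ᵐ ω ∂μ, ∃ w, (S₀ (X ω)).mulVec w = π (X ω)) :
    ∫ ω, (G (X ω)).mulVec (C ω • Z ω) ⬝ᵥ π (X ω) ∂μ =
      ∫ ω, f₀ (X ω) ⬝ᵥ π (X ω) ∂μ := by
  obtain ⟨MZ, hMZ⟩ := hZb
  obtain ⟨MY, hMY⟩ := hYb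
  obtain ⟨Mf, hMf⟩ := hf₀b
  obtain ⟨MG, hMG⟩ := hGb
  obtain ⟨Mπ, hMπ⟩ := hπb
  obtain rfl : C = fun ω => Z ω ⬝ᵥ Y ω := funext hC
  set u : (Fin p → ℝ) → Fin d → ℝ := fun x => π x ᵥ* G x
  have hu : Measurable u :=
    measurable_pi_lambda _ fun j => hπ.dotProduct (measurable_pi_lambda _ fun i => hG i j)
  have hZ' := memLp_top_apply_of_norm_le (μ := μ) hZ hMZ
  have hC' := MemLp.dotProduct hZ' (memLp_top_apply_of_norm_le hY hMY)
  have hu' : ∀ j, MemLp (fun ω => u (X ω) j) ∞ μ := fun j =>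
    MemLp.dotProduct (memLp_top_apply_of_norm_le (hπ.comp hX) fun ω => hMπ (X ω)) fun i =>
      memLp_top_of_bound ((hG i j).comp hX).aestronglyMeasurable MG
        (ae_of_all _ fun ω => (Real.norm_eq_abs _).trans_le (hMG (X ω) i j))
  calc ∫ ω, G (X ω) *ᵥ ((Z ω ⬝ᵥ Y ω) • Z ω) ⬝ᵥ π (X ω) ∂μ
      = ∫ ω, (Z ω ⬝ᵥ u (X ω)) * (Z ω ⬝ᵥ Y ω) ∂μ := by
        congr 1 with ω
        rw [mulVec_smul, smul_dotProduct, smul_eq_mul, dotProduct_comm _ (π (X ω)),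
          dotProduct_mulVec, dotProduct_comm (Z ω) (u (X ω))]
        exact mul_comm _ _
    _ = ∫ ω, (Z ω ⬝ᵥ u (X ω)) * (Z ω ⬝ᵥ f₀ (X ω)) ∂μ := by
        refine (integral_mul_eq_of_ae_eq_condExp (hX.prodMk hZ).comap_le ?_ ?_ ?_ hIgn).symm
        · exact (measurable_snd.comp (comap_measurable _)).dotProduct
            (hu.comp (measurable_fst.comp (comap_measurable _))) |>.stronglyMeasurable
        · exact (hC'.mul' (MemLp.dotProduct hZ' hu') (r := ∞)).integrable le_top
        · exact hC'.integrable le_top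
    _ = ∫ ω, u (X ω) ⬝ᵥ S₀ (X ω) *ᵥ f₀ (X ω) ∂μ :=
        integral_dotProduct_mul_dotProduct_eq_integral_dotProduct_mulVec hX.comap_le hZ'
          (fun j => (hu.eval.comp (comap_measurable X)).stronglyMeasurable) hu'
          (fun j => (hf₀.eval.comp (comap_measurable X)).stronglyMeasurable)
          (memLp_top_apply_of_norm_le (hf₀.comp hX) fun ω => hMf (X ω)) hS₀ce
    _ = ∫ ω, f₀ (X ω) ⬝ᵥ π (X ω) ∂μ := by
        refine integral_congr_ae ?_
        filter_upwards [hPen, hπcol, ae_transpose_eq_of_ae_eq_condExp_mul hS₀ce]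
          with ω hPen hcol hsymm
        exact vecMul_dotProduct_mulVec_of_mul_mul_self hsymm hPen.1 hcol _

/-- Proposition 1 (inverse spectral weighting identification): under ignorability, for a
bounded measurable `G` that is a.s. a Penrose pseudo-inverse of `Σ₀(X)` and a policy `π`
with `π(X)` a.s. in the column space of `Σ₀(X)`,
`E[(G(X) Z C)ᵀ π(X)] = E[f₀(X)ᵀ π(X)]`. -/
theorem stmt9 {Ω : Type*} [MeasurableSpace Ω] (μ : Measure Ω) [IsProbabilityMeasure μ]
    {p d : ℕ} (X : Ω → Fin p → ℝ) (Z Y : Ω → Fin d → ℝ)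
    (hX : Measurable X) (hZ : Measurable Z) (hY : Measurable Y)
    (hZb : ∃ M, ∀ ω, ‖Z ω‖ ≤ M) (hYb : ∃ M, ∀ ω, ‖Y ω‖ ≤ M)
    (C : Ω → ℝ) (hC : ∀ ω, C ω = Z ω ⬝ᵥ Y ω)
    (f₀ : (Fin p → ℝ) → Fin d → ℝ) (hf₀ : Measurable f₀) (hf₀b : ∃ M, ∀ x, ‖f₀ x‖ ≤ M)
    (hf₀ce : ∀ j, (fun ω => f₀ (X ω) j) =ᵐ[μ]
      μ[(fun ω => Y ω j) | MeasurableSpace.comap X inferInstance])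
    (S₀ : (Fin p → ℝ) → Matrix (Fin d) (Fin d) ℝ)
    (hS₀ : ∀ i j, Measurable fun x => S₀ x i j)
    (hS₀b : ∃ M, ∀ x i j, |S₀ x i j| ≤ M)
    (hS₀ce : ∀ i j, (fun ω => S₀ (X ω) i j) =ᵐ[μ]
      μ[(fun ω => Z ω i * Z ω j) | MeasurableSpace.comap X inferInstance])
    (hIgn : (fun ω => Z ω ⬝ᵥ f₀ (X ω)) =ᵐ[μ]
      μ[C | MeasurableSpace.comap (fun ω => (X ω, Z ω)) inferInstance])
    (G : (Fin p → ℝ) → Matrix (Fin d) (Fin d) ℝ)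
    (hG : ∀ i j, Measurable fun x => G x i j)
    (hGb : ∃ M, ∀ x i j, |G x i j| ≤ M)
    (hPen : ∀ᵐ ω ∂μ, Penrose (S₀ (X ω)) (G (X ω)))
    (π : (Fin p → ℝ) → Fin d → ℝ) (hπ : Measurable π) (hπb : ∃ M, ∀ x, ‖π x‖ ≤ M)
    (hπcol : ∀ᵐ ω ∂μ, ∃ w, (S₀ (X ω)).mulVec w = π (X ω)) :
    ∫ ω, (G (X ω)).mulVec (C ω • Z ω) ⬝ᵥ π (X ω) ∂μ =
      ∫ ω, f₀ (X ω) ⬝ᵥ π (X ω) ∂μ :=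
  stmt9_general μ X Z Y hX hZ hY hZb hYb C hC f₀ hf₀ hf₀b S₀ hS₀ce hIgn G hG hGb hPen π hπ hπb hπcol
end

section
/- Assume ignorability. Let H : ℝ^p → ℝ^{d×d} be any bounded measurable matrix-valued function and let π be any policy. Then E[(f₀(X) + H(X) Z (C − Zᵀ f₀(X)))ᵀ π(X)] = E[f₀(X)ᵀ π(X)]. -/
/-!
Write `s = C - Zᵀ f₀(X)` and `g = (H(X) Z)ᵀ π(X)`. The integrand is `f₀(X)ᵀ π(X) + s g`, and
`g` is a bounded function of `(X, Z)`; by ignorability `Zᵀ f₀(X) = E[C | X, Z]`, so the residual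
`s` is orthogonal to every such function and `E[s g] = 0`.
-/

open MeasureTheory Matrix
open scoped ENNReal

section Vectors

variable {α : Type*} [MeasurableSpace α] {m n : Type*} [Fintype n]

theorem Measurable.dotProduct_s11 {u v : α → n → ℝ} (hu : Measurable u) (hv : Measurable v) :
    Measurable fun a => u a ⬝ᵥ v a :=
  Finset.measurable_sum _ fun i _ =>
    ((measurable_pi_apply i).comp hu).mul ((measurable_pi_apply i).comp hv)

theorem Measurable.mulVec {A : α → Matrix m n ℝ} {v : α → n → ℝ}
    (hA : ∀ i j, Measurable fun a => A a i j) (hv : Measurable v) :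
    Measurable fun a => A a *ᵥ v a :=
  measurable_pi_iff.2 fun i => (measurable_pi_iff.2 (hA i)).dotProduct_s11 hv

variable {μ : Measure α} {p : ENNReal}

theorem MeasureTheory.MemLp.dotProduct_s11 {u v : α → n → ℝ} (hu : MemLp u ∞ μ) (hv : MemLp v p μ) :
    MemLp (fun a => u a ⬝ᵥ v a) p μ :=
  memLp_finsetSum _ fun i _ => (hv.eval i).mul (r := p) (hu.eval i)

theorem MeasureTheory.MemLp.mulVec [Fintype m] {A : α → Matrix m n ℝ} {v : α → n → ℝ}
    (hA : ∀ i j, MemLp (fun a => A a i j) ∞ μ) (hv : MemLp v p μ) :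
    MemLp (fun a => A a *ᵥ v a) p μ :=
  memLp_pi_iff.2 fun i => MemLp.dotProduct_s11 (memLp_pi_iff.2 (hA i)) hv

theorem MeasureTheory.memLp_top_of_exists_bound {E : Type*} [NormedAddCommGroup E] {f : α → E}
    (hf : AEStronglyMeasurable f μ) (hb : ∃ C, ∀ a, ‖f a‖ ≤ C) : MemLp f ∞ μ :=
  let ⟨C, hC⟩ := hb
  memLp_top_of_bound hf C (ae_of_all _ hC)

end Vectors

section Orthogonality

variable {Ω : Type*} {m m₀ : MeasurableSpace Ω} {μ : Measure[m₀] Ω}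

theorem MeasureTheory.integral_condExp_mul (hm : m ≤ m₀) [SigmaFinite (μ.trim hm)]
    {f g : Ω → ℝ} (hf : Integrable f μ) (hg : StronglyMeasurable[m] g) (hg' : MemLp g ∞ μ) :
    ∫ ω, (μ[f|m]) ω * g ω ∂μ = ∫ ω, f ω * g ω ∂μ :=
  calc ∫ ω, (μ[f|m]) ω * g ω ∂μ = ∫ ω, (μ[f * g|m]) ω ∂μ :=
        integral_congr_ae
          (condExp_mul_of_stronglyMeasurable_right hg (hf.mul_of_top_left hg') hf).symm
    _ = ∫ ω, f ω * g ω ∂μ := integral_condExp hm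

theorem MeasureTheory.integral_sub_condExp_mul_eq_zero (hm : m ≤ m₀) [SigmaFinite (μ.trim hm)]
    {f h g : Ω → ℝ} (hf : Integrable f μ) (hh : h =ᵐ[μ] μ[f|m])
    (hg : StronglyMeasurable[m] g) (hg' : MemLp g ∞ μ) :
    ∫ ω, (f ω - h ω) * g ω ∂μ = 0 := by
  have hhg : ∫ ω, h ω * g ω ∂μ = ∫ ω, f ω * g ω ∂μ :=
    (integral_congr_ae (hh.mono fun ω hω => by rw [hω])).trans (integral_condExp_mul hm hf hg hg')
  have hfg : Integrable (fun ω => f ω * g ω) μ := hf.mul_of_top_left hg'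
  have hhg' : Integrable (fun ω => h ω * g ω) μ :=
    (integrable_condExp.congr hh.symm).mul_of_top_left hg'
  simp only [sub_mul]
  rw [integral_sub hfg hhg', hhg, sub_self]

end Orthogonality

theorem stmt11_general {Ω : Type*} [MeasurableSpace Ω] (μ : Measure Ω) [IsProbabilityMeasure μ]
    {p d : ℕ} (X : Ω → Fin p → ℝ) (Z Y : Ω → Fin d → ℝ)
    (hX : Measurable X) (hZ : Measurable Z) (hY : Measurable Y)
    (hZb : ∃ M, ∀ ω, ‖Z ω‖ ≤ M) (hYb : ∃ M, ∀ ω, ‖Y ω‖ ≤ M)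
    (C : Ω → ℝ) (hC : ∀ ω, C ω = Z ω ⬝ᵥ Y ω)
    (f₀ : (Fin p → ℝ) → Fin d → ℝ) (hf₀ : Measurable f₀) (hf₀b : ∃ M, ∀ x, ‖f₀ x‖ ≤ M)
    (hIgn : (fun ω => Z ω ⬝ᵥ f₀ (X ω)) =ᵐ[μ]
      μ[C | MeasurableSpace.comap (fun ω => (X ω, Z ω)) inferInstance])
    (H : (Fin p → ℝ) → Matrix (Fin d) (Fin d) ℝ)
    (hH : ∀ i j, Measurable fun x => H x i j)
    (hHb : ∃ M, ∀ x i j, |H x i j| ≤ M)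
    (π : (Fin p → ℝ) → Fin d → ℝ) (hπ : Measurable π) (hπb : ∃ M, ∀ x, ‖π x‖ ≤ M) :
    ∫ ω, (f₀ (X ω) + (H (X ω)).mulVec ((C ω - Z ω ⬝ᵥ f₀ (X ω)) • Z ω)) ⬝ᵥ π (X ω) ∂μ =
      ∫ ω, f₀ (X ω) ⬝ᵥ π (X ω) ∂μ := by
  have hZLp : MemLp Z ∞ μ := memLp_top_of_exists_bound hZ.aestronglyMeasurable hZb
  have hYLp : MemLp Y ∞ μ := memLp_top_of_exists_bound hY.aestronglyMeasurable hYb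
  have hf₀Lp : MemLp (fun ω => f₀ (X ω)) ∞ μ := memLp_top_of_exists_bound
    (hf₀.comp hX).aestronglyMeasurable (hf₀b.imp fun M hM ω => hM (X ω))
  have hπLp : MemLp (fun ω => π (X ω)) ∞ μ := memLp_top_of_exists_bound
    (hπ.comp hX).aestronglyMeasurable (hπb.imp fun M hM ω => hM (X ω))
  have hHLp (i j) : MemLp (fun ω => H (X ω) i j) ∞ μ := memLp_top_of_exists_bound
    ((hH i j).comp hX).aestronglyMeasurable
    (hHb.imp fun M hM ω => (Real.norm_eq_abs _).trans_le (hM (X ω) i j))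
  have hCLp : MemLp C ∞ μ := by
    simpa only [← hC] using hZLp.dotProduct_s11 hYLp
  set g : Ω → ℝ := fun ω => H (X ω) *ᵥ Z ω ⬝ᵥ π (X ω)
  have hgLp : MemLp g ∞ μ := (MemLp.mulVec hHLp hZLp).dotProduct_s11 hπLp
  have hg : StronglyMeasurable[MeasurableSpace.comap (fun ω => (X ω, Z ω)) inferInstance] g :=
    ((Measurable.mulVec (fun i j => (hH i j).comp measurable_fst) measurable_snd).dotProduct_s11
      (hπ.comp measurable_fst)).comp (comap_measurable _) |>.stronglyMeasurable
  have hsplit (ω) : (f₀ (X ω) + H (X ω) *ᵥ ((C ω - Z ω ⬝ᵥ f₀ (X ω)) • Z ω)) ⬝ᵥ π (X ω) =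
      f₀ (X ω) ⬝ᵥ π (X ω) + (C ω - Z ω ⬝ᵥ f₀ (X ω)) * g ω := by
    rw [add_dotProduct, mulVec_smul, smul_dotProduct, smul_eq_mul]
  have hresidual_int : Integrable (fun ω => (C ω - Z ω ⬝ᵥ f₀ (X ω)) * g ω) μ :=
    ((hCLp.sub (hZLp.dotProduct_s11 hf₀Lp)).integrable le_top).mul_of_top_left hgLp
  simp only [hsplit]
  rw [integral_add ((hf₀Lp.dotProduct_s11 hπLp).integrable le_top) hresidual_int,
    integral_sub_condExp_mul_eq_zero (hX.prodMk hZ).comap_le (hCLp.integrable le_top) hIgn hg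
      hgLp,
    add_zero]

/-- Proposition 1 (doubly robust identification, correct outcome-model half): under
ignorability, for any bounded measurable matrix-valued weighting `H` and any policy `π`,
`E[(f₀(X) + H(X) Z (C - Zᵀ f₀(X)))ᵀ π(X)] = E[f₀(X)ᵀ π(X)]`. -/
theorem stmt11 {Ω : Type*} [MeasurableSpace Ω] (μ : Measure Ω) [IsProbabilityMeasure μ]
    {p d : ℕ} (X : Ω → Fin p → ℝ) (Z Y : Ω → Fin d → ℝ)
    (hX : Measurable X) (hZ : Measurable Z) (hY : Measurable Y)
    (hZb : ∃ M, ∀ ω, ‖Z ω‖ ≤ M) (hYb : ∃ M, ∀ ω, ‖Y ω‖ ≤ M)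
    (C : Ω → ℝ) (hC : ∀ ω, C ω = Z ω ⬝ᵥ Y ω)
    (f₀ : (Fin p → ℝ) → Fin d → ℝ) (hf₀ : Measurable f₀) (hf₀b : ∃ M, ∀ x, ‖f₀ x‖ ≤ M)
    (hf₀ce : ∀ j, (fun ω => f₀ (X ω) j) =ᵐ[μ]
      μ[(fun ω => Y ω j) | MeasurableSpace.comap X inferInstance])
    (hIgn : (fun ω => Z ω ⬝ᵥ f₀ (X ω)) =ᵐ[μ]
      μ[C | MeasurableSpace.comap (fun ω => (X ω, Z ω)) inferInstance])
    (H : (Fin p → ℝ) → Matrix (Fin d) (Fin d) ℝ)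
    (hH : ∀ i j, Measurable fun x => H x i j)
    (hHb : ∃ M, ∀ x i j, |H x i j| ≤ M)
    (π : (Fin p → ℝ) → Fin d → ℝ) (hπ : Measurable π) (hπb : ∃ M, ∀ x, ‖π x‖ ≤ M) :
    ∫ ω, (f₀ (X ω) + (H (X ω)).mulVec ((C ω - Z ω ⬝ᵥ f₀ (X ω)) • Z ω)) ⬝ᵥ π (X ω) ∂μ =
      ∫ ω, f₀ (X ω) ⬝ᵥ π (X ω) ∂μ :=
  stmt11_general μ X Z Y hX hZ hY hZb hYb C hC f₀ hf₀ hf₀b hIgn H hH hHb π hπ hπb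
end

section
/- Assume ignorability, and assume that the column space of Σ₀(X) equals a fixed linear subspace S of ℝ^d almost surely. Let G₀ : ℝ^p → ℝ^{d×d} be a bounded measurable matrix-valued function such that, almost surely, G₀(X) satisfies the Penrose equations for Σ₀(X). Then for any bounded measurable f : ℝ^p → ℝ^d, any bounded measurable H : ℝ^p → ℝ^{d×d}, and any policies π, π' with π(X), π'(X) ∈ S almost surely: E[(f(X) + H(X) Z (C − Zᵀ f(X)))ᵀ (π(X) − π'(X))] − E[f₀(X)ᵀ (π(X) − π'(X))] = E[(π(X) − π'(X))ᵀ (G₀(X) − H(X)) Σ₀(X) P_S(f(X) − f₀(X))], where P_S is the orthogonal projection of ℝ^d onto S. -/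
open MeasureTheory Matrix

section Aux

variable {Ω : Type*} [MeasurableSpace Ω] {μ : Measure Ω} [IsProbabilityMeasure μ]

/-- bounded measurable real-valued function -/
def BM (g : Ω → ℝ) : Prop := Measurable g ∧ ∃ M, ∀ ω, |g ω| ≤ M

lemma BM.integrable {g : Ω → ℝ} (h : BM g) : Integrable g μ := by
  obtain ⟨hm, M, hM⟩ := h
  exact ⟨hm.aestronglyMeasurable, HasFiniteIntegral.of_bounded (C := M)
    (Filter.Eventually.of_forall fun ω => by simpa [Real.norm_eq_abs] using hM ω)⟩

lemma BM.mul {g h : Ω → ℝ} (hg : BM g) (hh : BM h) : BM fun ω => g ω * h ω := by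
  obtain ⟨hgm, M, hM⟩ := hg; obtain ⟨hhm, N, hN⟩ := hh
  exact ⟨hgm.mul hhm, M * N, fun ω => by
    rw [abs_mul]
    exact mul_le_mul (hM ω) (hN ω) (abs_nonneg _) ((abs_nonneg _).trans (hM ω))⟩

lemma BM.const (c : ℝ) : BM fun _ : Ω => c := ⟨measurable_const, |c|, fun _ => le_rfl⟩

lemma BM.add {g h : Ω → ℝ} (hg : BM g) (hh : BM h) : BM fun ω => g ω + h ω := by
  obtain ⟨hgm, M, hM⟩ := hg; obtain ⟨hhm, N, hN⟩ := hh
  exact ⟨hgm.add hhm, M + N, fun ω => (abs_add_le _ _).trans (add_le_add (hM ω) (hN ω))⟩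

lemma BM.neg {g : Ω → ℝ} (hg : BM g) : BM fun ω => -g ω := by
  obtain ⟨hgm, M, hM⟩ := hg
  exact ⟨hgm.neg, M, fun ω => by simpa using hM ω⟩

lemma BM.sub {g h : Ω → ℝ} (hg : BM g) (hh : BM h) : BM fun ω => g ω - h ω := by
  simpa [sub_eq_add_neg] using hg.add hh.neg

lemma BM.sum {ι : Type*} (s : Finset ι) {g : ι → Ω → ℝ} (h : ∀ i ∈ s, BM (g i)) :
    BM fun ω => ∑ i ∈ s, g i ω := by
  classical
  induction s using Finset.induction_on with
  | empty => simpa using BM.const (0 : ℝ)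
  | @insert x s hx ih =>
    have := (h x (Finset.mem_insert_self x s)).add
      (ih fun i hi => h i (Finset.mem_insert_of_mem hi))
    simpa [Finset.sum_insert hx] using this

lemma BM.dot {d : ℕ} {x y : Ω → Fin d → ℝ} (hx : ∀ i, BM fun ω => x ω i)
    (hy : ∀ i, BM fun ω => y ω i) : BM fun ω => x ω ⬝ᵥ y ω :=
  BM.sum Finset.univ fun i _ => (hx i).mul (hy i)

end Aux

section Aux2

lemma integral_mul_condexp {Ω : Type*} [m0 : MeasurableSpace Ω] {μ : Measure Ω}
    [IsProbabilityMeasure μ] {m : MeasurableSpace Ω} (hm : m ≤ m0)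
    {φ g g' : Ω → ℝ} (hφm : Measurable[m] φ) (hφb : ∃ M, ∀ ω, |φ ω| ≤ M)
    (hgm : Measurable[m0] g) (hgb : ∃ M, ∀ ω, |g ω| ≤ M)
    (hg' : g' =ᵐ[μ] μ[g|m]) :
    ∫ ω, φ ω * g ω ∂μ = ∫ ω, φ ω * g' ω ∂μ := by
  haveI := isFiniteMeasure_trim (μ := μ) hm
  obtain ⟨M, hM⟩ := hφb
  obtain ⟨N, hN⟩ := hgb
  have hφ0 : Measurable[m0] φ := hφm.mono hm le_rfl
  have hgi : Integrable g μ := ⟨hgm.aestronglyMeasurable,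
    HasFiniteIntegral.of_bounded (C := N)
      (Filter.Eventually.of_forall fun ω => by simpa [Real.norm_eq_abs] using hN ω)⟩
  have h1 : Integrable (fun ω => φ ω * g ω) μ := by
    refine ⟨(hφ0.mul hgm).aestronglyMeasurable,
      HasFiniteIntegral.of_bounded (C := M * N) (Filter.Eventually.of_forall fun ω => ?_)⟩
    simp only [Real.norm_eq_abs, abs_mul]
    exact mul_le_mul (hM ω) (hN ω) (abs_nonneg _) ((abs_nonneg _).trans (hM ω))
  have heq := condExp_mul_of_stronglyMeasurable_left (μ := μ) hφm.stronglyMeasurable h1 hgi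
  calc ∫ ω, φ ω * g ω ∂μ = ∫ ω, (μ[fun ω => φ ω * g ω|m]) ω ∂μ := (integral_condExp hm).symm
    _ = ∫ ω, φ ω * (μ[g|m]) ω ∂μ := integral_congr_ae (by filter_upwards [heq] with ω h using h)
    _ = ∫ ω, φ ω * g' ω ∂μ :=
        integral_congr_ae (by filter_upwards [hg'] with ω h; rw [h])

end Aux2

lemma dr_alg {d : ℕ} {A G B : Matrix (Fin d) (Fin d) ℝ} (hsymm : Aᵀ = A)
    (hpen : Penrose A G) {S : Submodule ℝ (Fin d → ℝ)}
    (hrange : LinearMap.range A.mulVecLin = S)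
    {P : (Fin d → ℝ) →ₗ[ℝ] Fin d → ℝ}
    (hPorth : ∀ u, ∀ v ∈ S, (u - P u) ⬝ᵥ v = 0)
    {Δ : Fin d → ℝ} (hΔ : Δ ∈ S) (v : Fin d → ℝ) :
    Δ ⬝ᵥ v - Δ ⬝ᵥ (B * A) *ᵥ v = Δ ⬝ᵥ ((G - B) * A) *ᵥ (P v) := by
  obtain ⟨hp1, hp2, hp3, hp4⟩ := hpen
  have key : ∀ w ∈ S, w ⬝ᵥ P v = w ⬝ᵥ v := by
    intro w hw
    have h0 := hPorth v w hw
    rw [sub_dotProduct] at h0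
    have h1 : v ⬝ᵥ w = P v ⬝ᵥ w := by linarith
    rw [dotProduct_comm w (P v), ← h1, dotProduct_comm]
  have hΔr : Δ ∈ LinearMap.range A.mulVecLin := hrange.symm ▸ hΔ
  obtain ⟨u, hu⟩ := hΔr
  rw [Matrix.mulVecLin_apply] at hu
  have hGA : G * A = A * Gᵀ := by rw [← hp4, transpose_mul, hsymm]
  have hAGA : A * Gᵀ * A = A := by
    have e1 : (Aᵀ * G * Aᵀ)ᵀ = A * Gᵀ * A := by
      rw [transpose_mul, transpose_mul, transpose_transpose, ← Matrix.mul_assoc]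
    rw [hsymm, hp1, hsymm] at e1
    exact e1.symm
  have hGAA : G * A * A = A := by rw [hGA]; exact hAGA
  have hfix : (G * A) *ᵥ Δ = Δ := by
    rw [← hu, Matrix.mulVec_mulVec, Matrix.mul_assoc, ← Matrix.mul_assoc, hGAA]
  have t1 : Δ ⬝ᵥ (G * A) *ᵥ (P v) = Δ ⬝ᵥ v := by
    rw [dotProduct_mulVec]
    have e : Δ ᵥ* (G * A) = Δ := by rw [← hp4, vecMul_transpose, hfix]
    rw [e]
    exact key Δ hΔ
  have t2 : Δ ⬝ᵥ (B * A) *ᵥ (P v) = Δ ⬝ᵥ (B * A) *ᵥ v := by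
    rw [dotProduct_mulVec, dotProduct_mulVec]
    have hw : Δ ᵥ* (B * A) ∈ S := by
      have e : (B * A)ᵀ *ᵥ Δ = Δ ᵥ* (B * A) := mulVec_transpose _ _
      rw [← e, transpose_mul, hsymm, ← Matrix.mulVec_mulVec]
      rw [← hrange]
      exact ⟨Bᵀ *ᵥ Δ, Matrix.mulVecLin_apply _ _⟩
    exact key _ hw
  rw [Matrix.sub_mul, sub_mulVec, dotProduct_sub, t1, t2]



set_option maxHeartbeats 1000000

/-- The second-order error identity for the doubly robust score (key step in the proof of
Proposition 2, part 3): under ignorability, if the column space of `Σ₀(X)` a.s. equals a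
fixed subspace `S` with orthogonal projection `P` (characterized by `P u ∈ S` and
`u - P u ⊥ S`), `G₀(X)` is a.s. a Penrose pseudo-inverse of `Σ₀(X)`, and `π(X), π'(X) ∈ S`
a.s., then
`E[(f(X) + H(X) Z (C - Zᵀ f(X)))ᵀ (π(X) - π'(X))] - E[f₀(X)ᵀ (π(X) - π'(X))]
  = E[(π(X) - π'(X))ᵀ (G₀(X) - H(X)) Σ₀(X) P (f(X) - f₀(X))]`. -/
theorem stmt13 {Ω : Type*} [MeasurableSpace Ω] (μ : Measure Ω) [IsProbabilityMeasure μ]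
    {p d : ℕ} (X : Ω → Fin p → ℝ) (Z Y : Ω → Fin d → ℝ)
    (hX : Measurable X) (hZ : Measurable Z) (hY : Measurable Y)
    (hZb : ∃ M, ∀ ω, ‖Z ω‖ ≤ M) (hYb : ∃ M, ∀ ω, ‖Y ω‖ ≤ M)
    (C : Ω → ℝ) (hC : ∀ ω, C ω = Z ω ⬝ᵥ Y ω)
    (f₀ : (Fin p → ℝ) → Fin d → ℝ) (hf₀ : Measurable f₀) (hf₀b : ∃ M, ∀ x, ‖f₀ x‖ ≤ M)
    (hf₀ce : ∀ j, (fun ω => f₀ (X ω) j) =ᵐ[μ]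
      μ[(fun ω => Y ω j) | MeasurableSpace.comap X inferInstance])
    (S₀ : (Fin p → ℝ) → Matrix (Fin d) (Fin d) ℝ)
    (hS₀ : ∀ i j, Measurable fun x => S₀ x i j)
    (hS₀b : ∃ M, ∀ x i j, |S₀ x i j| ≤ M)
    (hS₀ce : ∀ i j, (fun ω => S₀ (X ω) i j) =ᵐ[μ]
      μ[(fun ω => Z ω i * Z ω j) | MeasurableSpace.comap X inferInstance])
    (hIgn : (fun ω => Z ω ⬝ᵥ f₀ (X ω)) =ᵐ[μ]
      μ[C | MeasurableSpace.comap (fun ω => (X ω, Z ω)) inferInstance])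
    (S : Submodule ℝ (Fin d → ℝ))
    (hcol : ∀ᵐ ω ∂μ, LinearMap.range (Matrix.mulVecLin (S₀ (X ω))) = S)
    (P : (Fin d → ℝ) →ₗ[ℝ] (Fin d → ℝ))
    (hPmem : ∀ u, P u ∈ S) (hPorth : ∀ u, ∀ v ∈ S, (u - P u) ⬝ᵥ v = 0)
    (G₀ : (Fin p → ℝ) → Matrix (Fin d) (Fin d) ℝ)
    (hG₀ : ∀ i j, Measurable fun x => G₀ x i j)
    (hG₀b : ∃ M, ∀ x i j, |G₀ x i j| ≤ M)
    (hPen : ∀ᵐ ω ∂μ, Penrose (S₀ (X ω)) (G₀ (X ω)))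
    (f : (Fin p → ℝ) → Fin d → ℝ) (hf : Measurable f) (hfb : ∃ M, ∀ x, ‖f x‖ ≤ M)
    (H : (Fin p → ℝ) → Matrix (Fin d) (Fin d) ℝ)
    (hH : ∀ i j, Measurable fun x => H x i j)
    (hHb : ∃ M, ∀ x i j, |H x i j| ≤ M)
    (π π' : (Fin p → ℝ) → Fin d → ℝ)
    (hπ : Measurable π) (hπ' : Measurable π')
    (hπb : ∃ M, ∀ x, ‖π x‖ ≤ M) (hπ'b : ∃ M, ∀ x, ‖π' x‖ ≤ M)
    (hπS : ∀ᵐ ω ∂μ, π (X ω) ∈ S) (hπ'S : ∀ᵐ ω ∂μ, π' (X ω) ∈ S) :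
    (∫ ω, (f (X ω) + (H (X ω)).mulVec ((C ω - Z ω ⬝ᵥ f (X ω)) • Z ω)) ⬝ᵥ
        (π (X ω) - π' (X ω)) ∂μ) -
        ∫ ω, f₀ (X ω) ⬝ᵥ (π (X ω) - π' (X ω)) ∂μ =
      ∫ ω, (π (X ω) - π' (X ω)) ⬝ᵥ
        ((G₀ (X ω) - H (X ω)) * S₀ (X ω)).mulVec (P (f (X ω) - f₀ (X ω))) ∂μ := by
  obtain ⟨Mz, hMz⟩ := hZb
  obtain ⟨My, hMy⟩ := hYb
  obtain ⟨Mf, hMf⟩ := hfb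
  obtain ⟨Mf0, hMf0⟩ := hf₀b
  obtain ⟨Mpi, hMpi⟩ := hπb
  obtain ⟨Mpi', hMpi'⟩ := hπ'b
  obtain ⟨MH, hMH⟩ := hHb
  obtain ⟨MS, hMS⟩ := hS₀b
  -- basic BM facts
  have bZ : ∀ i, BM fun ω => Z ω i := fun i =>
    ⟨(measurable_pi_apply i).comp hZ, Mz, fun ω =>
      le_trans (by simpa using norm_le_pi_norm (Z ω) i) (hMz ω)⟩
  have bY : ∀ i, BM fun ω => Y ω i := fun i =>
    ⟨(measurable_pi_apply i).comp hY, My, fun ω =>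
      le_trans (by simpa using norm_le_pi_norm (Y ω) i) (hMy ω)⟩
  have bf : ∀ i, BM fun ω => f (X ω) i := fun i =>
    ⟨(measurable_pi_apply i).comp (hf.comp hX), Mf, fun ω =>
      le_trans (by simpa using norm_le_pi_norm (f (X ω)) i) (hMf (X ω))⟩
  have bf0 : ∀ i, BM fun ω => f₀ (X ω) i := fun i =>
    ⟨(measurable_pi_apply i).comp (hf₀.comp hX), Mf0, fun ω =>
      le_trans (by simpa using norm_le_pi_norm (f₀ (X ω)) i) (hMf0 (X ω))⟩
  have bπ1 : ∀ i, BM fun ω => π (X ω) i := fun i =>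
    ⟨(measurable_pi_apply i).comp (hπ.comp hX), Mpi, fun ω =>
      le_trans (by simpa using norm_le_pi_norm (π (X ω)) i) (hMpi (X ω))⟩
  have bπ2 : ∀ i, BM fun ω => π' (X ω) i := fun i =>
    ⟨(measurable_pi_apply i).comp (hπ'.comp hX), Mpi', fun ω =>
      le_trans (by simpa using norm_le_pi_norm (π' (X ω)) i) (hMpi' (X ω))⟩
  have bD : ∀ i, BM fun ω => (π (X ω) - π' (X ω)) i := fun i => (bπ1 i).sub (bπ2 i)
  have bH : ∀ i j, BM fun ω => H (X ω) i j := fun i j =>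
    ⟨(hH i j).comp hX, MH, fun ω => hMH (X ω) i j⟩
  have bS : ∀ i j, BM fun ω => S₀ (X ω) i j := fun i j =>
    ⟨(hS₀ i j).comp hX, MS, fun ω => hMS (X ω) i j⟩
  have bC : BM C := by
    rw [show C = fun ω => Z ω ⬝ᵥ Y ω from funext hC]
    exact BM.dot bZ bY
  have bc : BM fun ω => C ω - Z ω ⬝ᵥ f (X ω) := bC.sub (BM.dot bZ bf)
  have ba : ∀ k, BM fun ω => ((π (X ω) - π' (X ω)) ᵥ* H (X ω)) k := fun k =>
    BM.sum Finset.univ fun i _ => (bD i).mul (bH i k)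
  have bφ : BM fun ω => ((π (X ω) - π' (X ω)) ᵥ* H (X ω)) ⬝ᵥ Z ω := BM.dot ba bZ
  have bb : ∀ j, BM fun ω => f₀ (X ω) j - f (X ω) j := fun j => (bf0 j).sub (bf j)
  have bt1 : BM fun ω => (f (X ω) - f₀ (X ω)) ⬝ᵥ (π (X ω) - π' (X ω)) :=
    BM.dot (fun i => (bf i).sub (bf0 i)) bD
  have bu2 : BM fun ω =>
      (π (X ω) - π' (X ω)) ⬝ᵥ (H (X ω) * S₀ (X ω)) *ᵥ (f₀ (X ω) - f (X ω)) :=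
    BM.dot bD (fun i => BM.sum Finset.univ fun j _ =>
      (BM.sum Finset.univ fun k _ => (bH i k).mul (bS k j)).mul (bb j))
  -- measurability w.r.t. comap σ-algebras
  have hφm1 : Measurable[MeasurableSpace.comap (fun ω => (X ω, Z ω)) inferInstance]
      fun ω => ((π (X ω) - π' (X ω)) ᵥ* H (X ω)) ⬝ᵥ Z ω := by
    have hψ : Measurable fun q : (Fin p → ℝ) × (Fin d → ℝ) =>
        ((π q.1 - π' q.1) ᵥ* H q.1) ⬝ᵥ q.2 := by
      have e : (fun q : (Fin p → ℝ) × (Fin d → ℝ) => ((π q.1 - π' q.1) ᵥ* H q.1) ⬝ᵥ q.2)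
          = fun q => ∑ k, (∑ i, (π q.1 i - π' q.1 i) * H q.1 i k) * q.2 k := by
        funext q; rfl
      rw [e]
      refine Finset.measurable_sum _ fun k _ =>
        Measurable.mul ?_ ((measurable_pi_apply k).comp measurable_snd)
      exact Finset.measurable_sum _ fun i _ =>
        (((measurable_pi_apply i).comp (hπ.comp measurable_fst)).sub
          ((measurable_pi_apply i).comp (hπ'.comp measurable_fst))).mul
          ((hH i k).comp measurable_fst)
    have hpair : Measurable[MeasurableSpace.comap (fun ω => (X ω, Z ω)) inferInstance]
        (fun ω => (X ω, Z ω)) := Measurable.of_comap_le le_rfl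
    have e2 : (fun ω => ((π (X ω) - π' (X ω)) ᵥ* H (X ω)) ⬝ᵥ Z ω)
        = (fun q : (Fin p → ℝ) × (Fin d → ℝ) => ((π q.1 - π' q.1) ᵥ* H q.1) ⬝ᵥ q.2)
          ∘ (fun ω => (X ω, Z ω)) := rfl
    rw [e2]
    exact hψ.comp hpair
  have hAkj : ∀ k j, Measurable[MeasurableSpace.comap X inferInstance]
      fun ω => ((π (X ω) - π' (X ω)) ᵥ* H (X ω)) k * (f₀ (X ω) j - f (X ω) j) := by
    intro k j
    have hx : Measurable fun x : Fin p → ℝ =>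
        ((π x - π' x) ᵥ* H x) k * (f₀ x j - f x j) := by
      refine Measurable.mul ?_
        (((measurable_pi_apply j).comp hf₀).sub ((measurable_pi_apply j).comp hf))
      have e : (fun x : Fin p → ℝ => ((π x - π' x) ᵥ* H x) k)
          = fun x => ∑ i, (π x i - π' x i) * H x i k := by funext x; rfl
      rw [e]
      exact Finset.measurable_sum _ fun i _ =>
        (((measurable_pi_apply i).comp hπ).sub ((measurable_pi_apply i).comp hπ')).mul (hH i k)
    have hXm : Measurable[MeasurableSpace.comap X inferInstance] X :=
      Measurable.of_comap_le le_rfl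
    have e2 : (fun ω => ((π (X ω) - π' (X ω)) ᵥ* H (X ω)) k * (f₀ (X ω) j - f (X ω) j))
        = (fun x : Fin p → ℝ => ((π x - π' x) ᵥ* H x) k * (f₀ x j - f x j)) ∘ X := rfl
    rw [e2]
    exact hx.comp hXm
  -- a.e. symmetry of S₀ (X ω)
  have hsymm_ae : ∀ᵐ ω ∂μ, (S₀ (X ω))ᵀ = S₀ (X ω) := by
    have h : ∀ i j : Fin d, ∀ᵐ ω ∂μ, S₀ (X ω) i j = S₀ (X ω) j i := by
      intro i j
      have e : (fun ω => Z ω i * Z ω j) = fun ω => Z ω j * Z ω i := by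
        funext ω; ring
      filter_upwards [hS₀ce i j, hS₀ce j i] with ω h1 h2
      rw [h1, h2, e]
    have h2 : ∀ᵐ ω ∂μ, ∀ i j : Fin d, S₀ (X ω) i j = S₀ (X ω) j i :=
      ae_all_iff.mpr fun i => ae_all_iff.mpr fun j => h i j
    filter_upwards [h2] with ω hω
    ext i j
    exact hω j i
  -- integrability of raw integrands
  have hint1 : Integrable (fun ω =>
      (f (X ω) + (H (X ω)).mulVec ((C ω - Z ω ⬝ᵥ f (X ω)) • Z ω)) ⬝ᵥ
        (π (X ω) - π' (X ω))) μ :=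
    (BM.dot (fun i => (bf i).add (BM.sum Finset.univ fun j _ =>
      (bH i j).mul (bc.mul (bZ j)))) bD).integrable
  have hint2 : Integrable (fun ω => f₀ (X ω) ⬝ᵥ (π (X ω) - π' (X ω))) μ :=
    (BM.dot bf0 bD).integrable
  -- step C : conditioning on (X, Z), then on X
  have stepC : ∫ ω, (C ω - Z ω ⬝ᵥ f (X ω)) *
        (((π (X ω) - π' (X ω)) ᵥ* H (X ω)) ⬝ᵥ Z ω) ∂μ
      = ∫ ω, (((π (X ω) - π' (X ω)) ᵥ* H (X ω)) ⬝ᵥ Z ω) *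
          (Z ω ⬝ᵥ (f₀ (X ω) - f (X ω))) ∂μ := by
    calc ∫ ω, (C ω - Z ω ⬝ᵥ f (X ω)) * (((π (X ω) - π' (X ω)) ᵥ* H (X ω)) ⬝ᵥ Z ω) ∂μ
        = ∫ ω, ((((π (X ω) - π' (X ω)) ᵥ* H (X ω)) ⬝ᵥ Z ω) * C ω
            - (((π (X ω) - π' (X ω)) ᵥ* H (X ω)) ⬝ᵥ Z ω) * (Z ω ⬝ᵥ f (X ω))) ∂μ :=
          integral_congr_ae (Filter.Eventually.of_forall fun ω => by ring)
      _ = (∫ ω, (((π (X ω) - π' (X ω)) ᵥ* H (X ω)) ⬝ᵥ Z ω) * C ω ∂μ)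
            - ∫ ω, (((π (X ω) - π' (X ω)) ᵥ* H (X ω)) ⬝ᵥ Z ω) * (Z ω ⬝ᵥ f (X ω)) ∂μ :=
          integral_sub (bφ.mul bC).integrable (bφ.mul (BM.dot bZ bf)).integrable
      _ = (∫ ω, (((π (X ω) - π' (X ω)) ᵥ* H (X ω)) ⬝ᵥ Z ω) * (Z ω ⬝ᵥ f₀ (X ω)) ∂μ)
            - ∫ ω, (((π (X ω) - π' (X ω)) ᵥ* H (X ω)) ⬝ᵥ Z ω) * (Z ω ⬝ᵥ f (X ω)) ∂μ := by
          rw [integral_mul_condexp ((hX.prodMk hZ).comap_le) hφm1 bφ.2 bC.1 bC.2 hIgn]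
      _ = ∫ ω, ((((π (X ω) - π' (X ω)) ᵥ* H (X ω)) ⬝ᵥ Z ω) * (Z ω ⬝ᵥ f₀ (X ω))
            - (((π (X ω) - π' (X ω)) ᵥ* H (X ω)) ⬝ᵥ Z ω) * (Z ω ⬝ᵥ f (X ω))) ∂μ :=
          (integral_sub (bφ.mul (BM.dot bZ bf0)).integrable
            (bφ.mul (BM.dot bZ bf)).integrable).symm
      _ = ∫ ω, (((π (X ω) - π' (X ω)) ᵥ* H (X ω)) ⬝ᵥ Z ω) *
            (Z ω ⬝ᵥ (f₀ (X ω) - f (X ω))) ∂μ := by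
          refine integral_congr_ae (Filter.Eventually.of_forall fun ω => ?_)
          dsimp only
          rw [dotProduct_sub]; ring
  -- step D : conditioning on X for each pair of coordinates
  have stepD : ∫ ω, (((π (X ω) - π' (X ω)) ᵥ* H (X ω)) ⬝ᵥ Z ω) *
        (Z ω ⬝ᵥ (f₀ (X ω) - f (X ω))) ∂μ
      = ∫ ω, (π (X ω) - π' (X ω)) ⬝ᵥ
          (H (X ω) * S₀ (X ω)) *ᵥ (f₀ (X ω) - f (X ω)) ∂μ := by
    have term_int : ∀ k j : Fin d, Integrable (fun ω =>
        (((π (X ω) - π' (X ω)) ᵥ* H (X ω)) k * (f₀ (X ω) j - f (X ω) j))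
          * (Z ω k * Z ω j)) μ := fun k j =>
      (((ba k).mul (bb j)).mul ((bZ k).mul (bZ j))).integrable
    have term_int2 : ∀ k j : Fin d, Integrable (fun ω =>
        (((π (X ω) - π' (X ω)) ᵥ* H (X ω)) k * (f₀ (X ω) j - f (X ω) j))
          * S₀ (X ω) k j) μ := fun k j =>
      (((ba k).mul (bb j)).mul (bS k j)).integrable
    calc ∫ ω, (((π (X ω) - π' (X ω)) ᵥ* H (X ω)) ⬝ᵥ Z ω) *
          (Z ω ⬝ᵥ (f₀ (X ω) - f (X ω))) ∂μ
        = ∫ ω, ∑ k, ∑ j, (((π (X ω) - π' (X ω)) ᵥ* H (X ω)) k *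
            (f₀ (X ω) j - f (X ω) j)) * (Z ω k * Z ω j) ∂μ := by
          refine integral_congr_ae (Filter.Eventually.of_forall fun ω => ?_)
          dsimp only
          show (∑ k, ((π (X ω) - π' (X ω)) ᵥ* H (X ω)) k * Z ω k) *
              (∑ j, Z ω j * (f₀ (X ω) - f (X ω)) j) = _
          rw [Finset.sum_mul_sum]
          refine Finset.sum_congr rfl fun k _ => Finset.sum_congr rfl fun j _ => ?_
          simp only [Pi.sub_apply]
          ring
      _ = ∑ k, ∑ j, ∫ ω, (((π (X ω) - π' (X ω)) ᵥ* H (X ω)) k *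
            (f₀ (X ω) j - f (X ω) j)) * (Z ω k * Z ω j) ∂μ := by
          rw [integral_finset_sum _ fun k _ => integrable_finset_sum _ fun j _ => term_int k j]
          exact Finset.sum_congr rfl fun k _ => integral_finset_sum _ fun j _ => term_int k j
      _ = ∑ k, ∑ j, ∫ ω, (((π (X ω) - π' (X ω)) ᵥ* H (X ω)) k *
            (f₀ (X ω) j - f (X ω) j)) * S₀ (X ω) k j ∂μ := by
          refine Finset.sum_congr rfl fun k _ => Finset.sum_congr rfl fun j _ => ?_
          exact integral_mul_condexp hX.comap_le (hAkj k j) ((ba k).mul (bb j)).2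
            ((bZ k).mul (bZ j)).1 ((bZ k).mul (bZ j)).2 (hS₀ce k j)
      _ = ∫ ω, ∑ k, ∑ j, (((π (X ω) - π' (X ω)) ᵥ* H (X ω)) k *
            (f₀ (X ω) j - f (X ω) j)) * S₀ (X ω) k j ∂μ := by
          rw [integral_finset_sum _ fun k _ => integrable_finset_sum _ fun j _ => term_int2 k j]
          exact (Finset.sum_congr rfl fun k _ =>
            (integral_finset_sum _ fun j _ => term_int2 k j).symm)
      _ = ∫ ω, (π (X ω) - π' (X ω)) ⬝ᵥ
            (H (X ω) * S₀ (X ω)) *ᵥ (f₀ (X ω) - f (X ω)) ∂μ := by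
          refine integral_congr_ae (Filter.Eventually.of_forall fun ω => ?_)
          dsimp only
          rw [dotProduct_mulVec, ← Matrix.vecMul_vecMul, Finset.sum_comm]
          show _ = ∑ j, (∑ k, ((π (X ω) - π' (X ω)) ᵥ* H (X ω)) k * S₀ (X ω) k j) *
            (f₀ (X ω) - f (X ω)) j
          refine Finset.sum_congr rfl fun j _ => ?_
          rw [Finset.sum_mul]
          refine Finset.sum_congr rfl fun k _ => ?_
          simp only [Pi.sub_apply]
          ring
  -- main computation
  calc (∫ ω, (f (X ω) + (H (X ω)).mulVec ((C ω - Z ω ⬝ᵥ f (X ω)) • Z ω)) ⬝ᵥ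
        (π (X ω) - π' (X ω)) ∂μ) - ∫ ω, f₀ (X ω) ⬝ᵥ (π (X ω) - π' (X ω)) ∂μ
      = ∫ ω, ((f (X ω) - f₀ (X ω)) ⬝ᵥ (π (X ω) - π' (X ω))
          + (C ω - Z ω ⬝ᵥ f (X ω)) *
            (((π (X ω) - π' (X ω)) ᵥ* H (X ω)) ⬝ᵥ Z ω)) ∂μ := by
        rw [← integral_sub hint1 hint2]
        refine integral_congr_ae (Filter.Eventually.of_forall fun ω => ?_)
        dsimp only
        rw [add_dotProduct, mulVec_smul, smul_dotProduct, smul_eq_mul, sub_dotProduct,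
          dotProduct_comm ((H (X ω)) *ᵥ Z ω), dotProduct_mulVec]
        ring
    _ = (∫ ω, (f (X ω) - f₀ (X ω)) ⬝ᵥ (π (X ω) - π' (X ω)) ∂μ)
          + ∫ ω, (C ω - Z ω ⬝ᵥ f (X ω)) *
            (((π (X ω) - π' (X ω)) ᵥ* H (X ω)) ⬝ᵥ Z ω) ∂μ :=
        integral_add bt1.integrable (bc.mul bφ).integrable
    _ = (∫ ω, (f (X ω) - f₀ (X ω)) ⬝ᵥ (π (X ω) - π' (X ω)) ∂μ)
          + ∫ ω, (π (X ω) - π' (X ω)) ⬝ᵥ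
              (H (X ω) * S₀ (X ω)) *ᵥ (f₀ (X ω) - f (X ω)) ∂μ := by
        rw [stepC, stepD]
    _ = ∫ ω, ((f (X ω) - f₀ (X ω)) ⬝ᵥ (π (X ω) - π' (X ω))
          + (π (X ω) - π' (X ω)) ⬝ᵥ
              (H (X ω) * S₀ (X ω)) *ᵥ (f₀ (X ω) - f (X ω))) ∂μ :=
        (integral_add bt1.integrable bu2.integrable).symm
    _ = ∫ ω, (π (X ω) - π' (X ω)) ⬝ᵥ
          ((G₀ (X ω) - H (X ω)) * S₀ (X ω)).mulVec (P (f (X ω) - f₀ (X ω))) ∂μ := by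
        refine integral_congr_ae ?_
        filter_upwards [hPen, hcol, hπS, hπ'S, hsymm_ae] with ω h1 h2 h3 h4 h5
        rw [dotProduct_comm (f (X ω) - f₀ (X ω)),
          show f₀ (X ω) - f (X ω) = -(f (X ω) - f₀ (X ω)) from (neg_sub _ _).symm,
          Matrix.mulVec_neg, dotProduct_neg, ← sub_eq_add_neg]
        exact dr_alg h5 h1 h2 hPorth (S.sub_mem h3 h4) _
end

section
/- For any one-hot policy π̃, we have E[Σ_{j=1}^m (1{Z = z_j} / e_j(X)) · C · π̃_j(X)] = V(π̃). -/
/-!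
Fix an action `j` and write `B = 1{Z = z_j}`. Conditioning on `(X, Z)` replaces `C` by `g_j(X)`
on `{Z = z_j}`; conditioning then on `X` replaces `B` by its propensity `e_j(X)`, which cancels
the inverse propensity weight. The one delicate point is the integrability of `B / e_j(X)`: by
monotone convergence it follows from `E[min(1/e_j(X), n) B] = E[min(1/e_j(X), n) e_j(X)] ≤ 1`.
-/

open MeasureTheory Filter Topology

section CondExp

variable {Ω : Type*} {m mΩ : MeasurableSpace Ω} {μ : Measure Ω}

theorem integral_mul_condExp_of_stronglyMeasurable_left (hm : m ≤ mΩ) [SigmaFinite (μ.trim hm)]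
    {f g : Ω → ℝ} (hf : StronglyMeasurable[m] f) (hfg : Integrable (f * g) μ)
    (hg : Integrable g μ) :
    ∫ ω, f ω * g ω ∂μ = ∫ ω, f ω * μ[g | m] ω ∂μ :=
  (integral_condExp hm).symm.trans
    (integral_congr_ae (condExp_mul_of_stronglyMeasurable_left hf hfg hg))

theorem integrable_mul_of_integrable_mul_condExp (hm : m ≤ mΩ) [SigmaFinite (μ.trim hm)]
    {f g : Ω → ℝ} (hf : StronglyMeasurable[m] f) (hf0 : 0 ≤ f) (hg : Integrable g μ)
    (hg0 : 0 ≤ᵐ[μ] g) (hfg : Integrable (f * μ[g | m]) μ) : Integrable (f * g) μ := by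
  set F : ℕ → Ω → ℝ := fun n ω => min (f ω) n
  have hF : ∀ n, StronglyMeasurable[m] (F n) := fun n => by fun_prop
  have hF_bound : ∀ n ω, ‖F n ω‖ ≤ n := fun n ω => by
    rw [Real.norm_eq_abs, abs_of_nonneg (le_min (hf0 ω) n.cast_nonneg)]
    exact min_le_right _ _
  have hFg : ∀ n, Integrable (fun ω => F n ω * g ω) μ := fun n =>
    hg.bdd_mul ((hF n).mono hm).aestronglyMeasurable (ae_of_all _ (hF_bound n))
  have hFg_le : ∀ n, ∫ ω, F n ω * g ω ∂μ ≤ ∫ ω, f ω * μ[g | m] ω ∂μ := fun n => by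
    rw [integral_mul_condExp_of_stronglyMeasurable_left hm (hF n) (hFg n) hg]
    refine integral_mono_ae (integrable_condExp.bdd_mul ((hF n).mono hm).aestronglyMeasurable
      (ae_of_all _ (hF_bound n))) hfg ?_
    filter_upwards [condExp_nonneg (m := m) hg0] with ω hω
    exact mul_le_mul_of_nonneg_right (min_le_left _ _) hω
  have hfg0 : 0 ≤ᵐ[μ] f * g := hg0.mono fun ω hω => mul_nonneg (hf0 ω) hω
  have hlim : Tendsto (fun n => ∫⁻ ω, ENNReal.ofReal (F n ω * g ω) ∂μ) atTop
      (𝓝 (∫⁻ ω, ENNReal.ofReal (f ω * g ω) ∂μ)) := by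
    refine lintegral_tendsto_of_tendsto_of_monotone
      (fun n => (hFg n).aemeasurable.ennreal_ofReal) ?_ ?_
    · filter_upwards [hg0] with ω hω n k hnk
      exact ENNReal.ofReal_le_ofReal (mul_le_mul_of_nonneg_right
        (min_le_min le_rfl (by exact_mod_cast hnk)) hω)
    · refine ae_of_all _ fun ω => (ENNReal.continuous_ofReal.tendsto _).comp ?_
      refine tendsto_atTop_of_eventually_const (i₀ := ⌈f ω⌉₊) fun n hn => ?_
      rw [show F n ω = f ω from min_eq_left ((Nat.le_ceil _).trans (by exact_mod_cast hn))]
  refine ⟨(hf.mono hm).aestronglyMeasurable.mul hg.1, (hasFiniteIntegral_iff_ofReal hfg0).2 ?_⟩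
  change ∫⁻ ω, ENNReal.ofReal (f ω * g ω) ∂μ < ⊤
  refine (le_of_tendsto' hlim fun n => ?_).trans_lt
    (ENNReal.ofReal_lt_top (r := ∫ ω, f ω * μ[g | m] ω ∂μ))
  rw [← ofReal_integral_eq_lintegral_ofReal (hFg n)
    (hg0.mono fun ω hω => mul_nonneg (le_min (hf0 ω) n.cast_nonneg) hω)]
  exact ENNReal.ofReal_le_ofReal (hFg_le n)

theorem integrable_div_of_ae_eq_condExp [IsFiniteMeasure μ] (hm : m ≤ mΩ) {g q : Ω → ℝ}
    (hg : Integrable g μ) (hg0 : 0 ≤ᵐ[μ] g) (hq : StronglyMeasurable[m] q)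
    (hqg : q =ᵐ[μ] μ[g | m]) (hq0 : ∀ᵐ ω ∂μ, 0 < q ω) :
    Integrable (fun ω => g ω / q ω) μ := by
  have := isFiniteMeasure_trim (μ := μ) hm
  have hqg_int : Integrable ((fun ω => |q ω|⁻¹) * μ[g | m]) μ :=
    (integrable_const (1 : ℝ)).congr <| by
      filter_upwards [hqg, hq0] with ω hqω hω
      simp [← hqω, abs_of_pos hω, hω.ne']
  refine (integrable_mul_of_integrable_mul_condExp hm (by fun_prop) (fun ω => by positivity) hg hg0
    hqg_int).congr ?_
  filter_upwards [hq0] with ω hω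
  simp [abs_of_pos hω, div_eq_inv_mul]

end CondExp

section InversePropensityWeighting

variable {Ω α β : Type*} [MeasurableSpace Ω] [MeasurableSpace α] [MeasurableSpace β]
  [MeasurableSingletonClass β] [DecidableEq β] {μ : Measure Ω} [IsFiniteMeasure μ]
  {X : Ω → α} {Z : Ω → β} {b : β} {e : α → ℝ}

theorem integrable_ite_eq (hZ : Measurable Z) :
    Integrable (fun ω => if Z ω = b then (1 : ℝ) else 0) μ :=
  (integrable_const (1 : ℝ)).mono'
    (measurable_const.ite (hZ (measurableSet_singleton b)) measurable_const).aestronglyMeasurable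
    (ae_of_all _ fun ω => by split_ifs <;> simp)

theorem integrable_indicator_div_propensity (hX : Measurable X) (hZ : Measurable Z)
    (he : Measurable e)
    (hece : (fun ω => e (X ω)) =ᵐ[μ]
      μ[(fun ω => if Z ω = b then (1 : ℝ) else 0) | MeasurableSpace.comap X inferInstance])
    (hepos : ∀ᵐ ω ∂μ, 0 < e (X ω)) :
    Integrable (fun ω => (if Z ω = b then (1 : ℝ) else 0) / e (X ω)) μ :=
  integrable_div_of_ae_eq_condExp hX.comap_le (integrable_ite_eq hZ)
    (ae_of_all _ fun ω => show (0 : ℝ) ≤ if Z ω = b then 1 else 0 by split_ifs <;> simp)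
    (he.comp (comap_measurable X)).stronglyMeasurable hece hepos

theorem integrable_ipw_term (hX : Measurable X) (hZ : Measurable Z) (he : Measurable e)
    (hece : (fun ω => e (X ω)) =ᵐ[μ]
      μ[(fun ω => if Z ω = b then (1 : ℝ) else 0) | MeasurableSpace.comap X inferInstance])
    (hepos : ∀ᵐ ω ∂μ, 0 < e (X ω)) {C : Ω → ℝ} (hC : Measurable C) {MC : ℝ}
    (hCM : ∀ ω, |C ω| ≤ MC) {w : α → ℝ} (hw : Measurable w) {Mw : ℝ} (hwM : ∀ x, |w x| ≤ Mw) :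
    Integrable (fun ω => (if Z ω = b then (1 : ℝ) else 0) / e (X ω) * C ω * w (X ω)) μ :=
  ((integrable_indicator_div_propensity hX hZ he hece hepos).mul_bdd hC.aestronglyMeasurable
    (ae_of_all _ hCM)).mul_bdd (hw.comp hX).aestronglyMeasurable (ae_of_all _ fun ω => hwM (X ω))

theorem integral_ipw_term (hX : Measurable X) (hZ : Measurable Z) (he : Measurable e)
    (hece : (fun ω => e (X ω)) =ᵐ[μ]
      μ[(fun ω => if Z ω = b then (1 : ℝ) else 0) | MeasurableSpace.comap X inferInstance])
    (hepos : ∀ᵐ ω ∂μ, 0 < e (X ω)) {C : Ω → ℝ} (hC : Measurable C) {MC : ℝ}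
    (hCM : ∀ ω, |C ω| ≤ MC) {g : α → ℝ} (hg : Measurable g) {Mg : ℝ} (hgM : ∀ x, |g x| ≤ Mg)
    (hgce : ∀ᵐ ω ∂μ, Z ω = b →
      μ[C | MeasurableSpace.comap (fun ω => (X ω, Z ω)) inferInstance] ω = g (X ω))
    {w : α → ℝ} (hw : Measurable w) {Mw : ℝ} (hwM : ∀ x, |w x| ≤ Mw) :
    ∫ ω, (if Z ω = b then (1 : ℝ) else 0) / e (X ω) * C ω * w (X ω) ∂μ =
      ∫ ω, w (X ω) * g (X ω) ∂μ := by
  set B : Ω → ℝ := fun ω => if Z ω = b then 1 else 0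
  have hmX : MeasurableSpace.comap X inferInstance ≤ _ := hX.comap_le
  have hmXZ : MeasurableSpace.comap (fun ω => (X ω, Z ω)) inferInstance ≤ _ :=
    (hX.prodMk hZ).comap_le
  have := isFiniteMeasure_trim (μ := μ) hmX
  have := isFiniteMeasure_trim (μ := μ) hmXZ
  have hBq := integrable_indicator_div_propensity hX hZ he hece hepos
  have hweightXZ_meas :
      StronglyMeasurable[MeasurableSpace.comap (fun ω => (X ω, Z ω)) inferInstance]
      fun ω => B ω / e (X ω) * w (X ω) := by
    refine Measurable.stronglyMeasurable (Measurable.comp (g := fun xy : α × β =>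
      (if xy.2 = b then (1 : ℝ) else 0) / e xy.1 * w xy.1) ?_ (comap_measurable _))
    exact ((measurable_const.ite (measurable_snd (measurableSet_singleton b)) measurable_const).div
      (he.comp measurable_fst)).mul (hw.comp measurable_fst)
  have hweightC : Integrable (fun ω => B ω / e (X ω) * w (X ω) * C ω) μ := by
    simpa only [mul_right_comm _ (C _)] using integrable_ipw_term hX hZ he hece hepos hC hCM hw hwM
  have hweightX_meas : StronglyMeasurable[MeasurableSpace.comap X inferInstance]
      fun ω => w (X ω) * g (X ω) / e (X ω) :=
    ((hw.mul hg).div he).comp (comap_measurable X) |>.stronglyMeasurable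
  have hweightB : Integrable (fun ω => w (X ω) * g (X ω) / e (X ω) * B ω) μ := by
    refine (hBq.mul_bdd ((hw.mul hg).comp hX).aestronglyMeasurable (c := Mw * Mg)
      (ae_of_all _ fun ω => ?_)).congr (ae_of_all _ fun ω => ?_)
    · simpa [abs_mul] using
        mul_le_mul (hwM (X ω)) (hgM (X ω)) (abs_nonneg _) ((abs_nonneg _).trans (hwM (X ω)))
    · simp only [Function.comp, Pi.mul_apply]; ring
  calc ∫ ω, B ω / e (X ω) * C ω * w (X ω) ∂μ
      = ∫ ω, B ω / e (X ω) * w (X ω) * C ω ∂μ := by simp_rw [mul_right_comm _ (C _)]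
    _ = ∫ ω, B ω / e (X ω) * w (X ω) *
          μ[C | MeasurableSpace.comap (fun ω => (X ω, Z ω)) inferInstance] ω ∂μ :=
      integral_mul_condExp_of_stronglyMeasurable_left hmXZ hweightXZ_meas hweightC
        (.of_bound hC.aestronglyMeasurable MC (ae_of_all _ hCM))
    _ = ∫ ω, w (X ω) * g (X ω) / e (X ω) * B ω ∂μ := by
      refine integral_congr_ae ?_
      filter_upwards [hgce] with ω hω
      by_cases hZb : Z ω = b
      · simp [B, hZb, hω hZb]; ring
      · simp [B, hZb]
    _ = ∫ ω, w (X ω) * g (X ω) / e (X ω) * μ[B | MeasurableSpace.comap X inferInstance] ω ∂μ :=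
      integral_mul_condExp_of_stronglyMeasurable_left hmX hweightX_meas hweightB
        (integrable_ite_eq hZ)
    _ = ∫ ω, w (X ω) * g (X ω) ∂μ := by
      refine integral_congr_ae ?_
      filter_upwards [hece, hepos] with ω hω hω0
      simp [← hω, hω0.ne']

end InversePropensityWeighting

theorem stmt14_general {Ω : Type*} [MeasurableSpace Ω] (μ : Measure Ω) [IsProbabilityMeasure μ]
    {p d m : ℕ} (X : Ω → Fin p → ℝ) (hX : Measurable X)
    (z : Fin m → Fin d → ℝ) (hz : Function.Injective z)
    (Z : Ω → Fin d → ℝ) (hZ : Measurable Z)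
    (C : Ω → ℝ) (hC : Measurable C) (hCb : ∃ M, ∀ ω, |C ω| ≤ M)
    (e : (Fin p → ℝ) → Fin m → ℝ) (he : Measurable e)
    (hece : ∀ j, (fun ω => e (X ω) j) =ᵐ[μ]
      μ[(fun ω => if Z ω = z j then (1 : ℝ) else 0) | MeasurableSpace.comap X inferInstance])
    (hepos : ∀ j, ∀ᵐ ω ∂μ, 0 < e (X ω) j)
    (g : (Fin p → ℝ) → Fin m → ℝ) (hg : Measurable g) (hgb : ∃ M, ∀ x, ‖g x‖ ≤ M)
    (hgce : (fun ω => ∑ j, (if Z ω = z j then (1 : ℝ) else 0) * g (X ω) j) =ᵐ[μ]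
      μ[C | MeasurableSpace.comap (fun ω => (X ω, Z ω)) inferInstance])
    (pol : (Fin p → ℝ) → Fin m → ℝ) (hpol : Measurable pol)
    (hpol01 : ∀ x j, pol x j = 0 ∨ pol x j = 1) :
    ∫ ω, ∑ j, (if Z ω = z j then (1 : ℝ) else 0) / e (X ω) j * C ω * pol (X ω) j ∂μ =
      ∫ ω, ∑ j, pol (X ω) j * g (X ω) j ∂μ := by
  obtain ⟨MC, hMC⟩ := hCb
  obtain ⟨Mg, hMg⟩ := hgb
  have he_j (j : Fin m) : Measurable fun x => e x j := by fun_prop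
  have hg_j (j : Fin m) : Measurable fun x => g x j := by fun_prop
  have hpol_j (j : Fin m) : Measurable fun x => pol x j := by fun_prop
  have hg_le (j : Fin m) (x : Fin p → ℝ) : |g x j| ≤ Mg := (norm_le_pi_norm (g x) j).trans (hMg x)
  have hpol_le (j : Fin m) (x : Fin p → ℝ) : |pol x j| ≤ 1 := by
    rcases hpol01 x j with h | h <;> simp [h]
  have hgce_j (j : Fin m) : ∀ᵐ ω ∂μ, Z ω = z j →
      μ[C | MeasurableSpace.comap (fun ω => (X ω, Z ω)) inferInstance] ω = g (X ω) j :=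
    hgce.mono fun ω hω hZj => by simp [← hω, hZj, hz.eq_iff]
  have hvalue_int (j : Fin m) : Integrable (fun ω => pol (X ω) j * g (X ω) j) μ :=
    .of_bound (by fun_prop) Mg (ae_of_all _ fun ω => by
      simpa [abs_mul] using mul_le_mul (hpol_le j (X ω)) (hg_le j (X ω)) (abs_nonneg _) zero_le_one)
  rw [integral_finsetSum _ fun j _ => integrable_ipw_term hX hZ (he_j j) (hece j) (hepos j) hC hMC
      (hpol_j j) (hpol_le j), integral_finsetSum _ fun j _ => hvalue_int j]
  exact Finset.sum_congr rfl fun j _ => integral_ipw_term hX hZ (he_j j) (hece j) (hepos j) hC hMC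
    (hg_j j) (hg_le j) (hgce_j j) (hpol_j j) (hpol_le j)

/-- Lemma B.1 (inverse propensity weighting identification for the naive discrete-action
formulation): for any one-hot policy `π̃`,
`E[∑ j, (1{Z = z_j} / e_j(X)) · C · π̃_j(X)] = V(π̃) = E[∑ j, π̃_j(X) g_j(X)]`. -/
theorem stmt14 {Ω : Type*} [MeasurableSpace Ω] (μ : Measure Ω) [IsProbabilityMeasure μ]
    {p d m : ℕ} (X : Ω → Fin p → ℝ) (hX : Measurable X)
    (z : Fin m → Fin d → ℝ) (hz : Function.Injective z)
    (Z : Ω → Fin d → ℝ) (hZ : Measurable Z) (hZval : ∀ ω, ∃ j, Z ω = z j)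
    (C : Ω → ℝ) (hC : Measurable C) (hCb : ∃ M, ∀ ω, |C ω| ≤ M)
    (e : (Fin p → ℝ) → Fin m → ℝ) (he : Measurable e)
    (hece : ∀ j, (fun ω => e (X ω) j) =ᵐ[μ]
      μ[(fun ω => if Z ω = z j then (1 : ℝ) else 0) | MeasurableSpace.comap X inferInstance])
    (hepos : ∀ j, ∀ᵐ ω ∂μ, 0 < e (X ω) j)
    (g : (Fin p → ℝ) → Fin m → ℝ) (hg : Measurable g) (hgb : ∃ M, ∀ x, ‖g x‖ ≤ M)
    (hgce : (fun ω => ∑ j, (if Z ω = z j then (1 : ℝ) else 0) * g (X ω) j) =ᵐ[μ]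
      μ[C | MeasurableSpace.comap (fun ω => (X ω, Z ω)) inferInstance])
    (pol : (Fin p → ℝ) → Fin m → ℝ) (hpol : Measurable pol)
    (hpol01 : ∀ x j, pol x j = 0 ∨ pol x j = 1)
    (hpolOH : ∀ x, ∃! j, pol x j = 1) :
    ∫ ω, ∑ j, (if Z ω = z j then (1 : ℝ) else 0) / e (X ω) j * C ω * pol (X ω) j ∂μ =
      ∫ ω, ∑ j, pol (X ω) j * g (X ω) j ∂μ :=
  stmt14_general μ X hX z hz Z hZ C hC hCb e he hece hepos g hg hgb hgce pol hpol hpol01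
end

section
/- For every α ≥ 0 and γ ≥ 0 there exists a positive constant C̃(α, γ) such that the following holds. Suppose the margin condition with parameters α, γ holds and 𝒵*(X) is a singleton almost surely. Then for every measurable policy π : ℝ^p → 𝒵∠, P(π(X) ≠ π_{f₀}(X)) ≤ C̃(α, γ) · (Reg(π)/B)^(α/(1+α)). -/
open MeasureTheory Matrix

/-- The set of optimal decisions `𝒵*(x) = argmin_{z ∈ 𝒵} f₀(x)ᵀ z`, where `𝒵` is the
convex hull of the vertex set `ZA`. -/
def Zstar {p d : ℕ} (ZA : Finset (Fin d → ℝ))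
    (f₀ : (Fin p → ℝ) → Fin d → ℝ) (x : Fin p → ℝ) : Set (Fin d → ℝ) :=
  {w | w ∈ convexHull ℝ (ZA : Set (Fin d → ℝ)) ∧
    ∀ w' ∈ convexHull ℝ (ZA : Set (Fin d → ℝ)), f₀ x ⬝ᵥ w ≤ f₀ x ⬝ᵥ w'}

open Classical in
/-- The sub-optimality gap `Δ(x)`: if `𝒵*(x) ≠ 𝒵`, the difference between the smallest
value of `f₀(x)ᵀ z` over suboptimal vertices `z ∈ 𝒵∠ \ 𝒵*(x)` and the optimal value
`inf_{z ∈ 𝒵} f₀(x)ᵀ z`; otherwise `0`. -/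
noncomputable def Delta {p d : ℕ} (ZA : Finset (Fin d → ℝ))
    (f₀ : (Fin p → ℝ) → Fin d → ℝ) (x : Fin p → ℝ) : ℝ :=
  if Zstar ZA f₀ x ≠ convexHull ℝ (ZA : Set (Fin d → ℝ)) then
    sInf ((fun w => f₀ x ⬝ᵥ w) '' ((ZA : Set (Fin d → ℝ)) \ Zstar ZA f₀ x)) -
      sInf ((fun w => f₀ x ⬝ᵥ w) '' convexHull ℝ (ZA : Set (Fin d → ℝ)))
  else 0

/-!
On the event `π(X) ≠ π_{f₀}(X)` the regret integrand `f₀(X)ᵀ(π(X) - π_{f₀}(X))` is at least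
the gap `Δ(X) > 0`, because `π(X)` is then a vertex outside `𝒵*(X)`. So for every `δ > 0`
this event is covered by `{0 < Δ(X) ≤ δ}`, of probability at most `(γδ/B)^α` by the margin
condition, and by `{f₀(X)ᵀ(π(X) - π_{f₀}(X)) ≥ δ}`, of probability at most `Reg(π)/δ` by
Markov's inequality. Balancing the two terms with `δ = B (Reg(π)/B)^{1/(1+α)}` gives the bound
with `C̃(α, γ) = γ^α + 1`.
-/

open Set

section Zstar

variable {p d : ℕ} {ZA : Finset (Fin d → ℝ)} {f₀ : (Fin p → ℝ) → Fin d → ℝ} {x : Fin p → ℝ}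
  {zs z : Fin d → ℝ}

lemma dotProduct_le_of_mem_Zstar (hzs : zs ∈ Zstar ZA f₀ x) (hz : z ∈ ZA) :
    f₀ x ⬝ᵥ zs ≤ f₀ x ⬝ᵥ z :=
  hzs.2 z (subset_convexHull ℝ _ hz)

lemma dotProduct_lt_of_Zstar_eq_singleton (hzs : Zstar ZA f₀ x = {zs})
    (hz : z ∈ convexHull ℝ (ZA : Set (Fin d → ℝ))) (hne : z ≠ zs) :
    f₀ x ⬝ᵥ zs < f₀ x ⬝ᵥ z := by
  have hzs_mem : zs ∈ Zstar ZA f₀ x := hzs ▸ rfl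
  refine (hzs_mem.2 z hz).lt_of_ne fun heq => hne ?_
  have hz_mem : z ∈ Zstar ZA f₀ x := ⟨hz, fun w hw => heq ▸ hzs_mem.2 w hw⟩
  rwa [hzs] at hz_mem

lemma Delta_mem_Ioc_of_Zstar_eq_singleton (hzs : Zstar ZA f₀ x = {zs}) (hz : z ∈ ZA)
    (hne : z ≠ zs) : Delta ZA f₀ x ∈ Ioc 0 (f₀ x ⬝ᵥ (z - zs)) := by
  have hzs_mem : zs ∈ Zstar ZA f₀ x := hzs ▸ rfl
  have hz_hull : z ∈ convexHull ℝ (ZA : Set (Fin d → ℝ)) := subset_convexHull ℝ _ hz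
  have hz_sub : z ∈ (ZA : Set (Fin d → ℝ)) \ Zstar ZA f₀ x := ⟨hz, by simpa [hzs] using hne⟩
  have hZstar_ne : Zstar ZA f₀ x ≠ convexHull ℝ (ZA : Set (Fin d → ℝ)) :=
    fun h => hz_sub.2 (h ▸ hz_hull)
  have hopt : sInf ((f₀ x ⬝ᵥ ·) '' convexHull ℝ (ZA : Set (Fin d → ℝ))) = f₀ x ⬝ᵥ zs :=
    IsLeast.csInf_eq ⟨⟨zs, hzs_mem.1, rfl⟩, by rintro _ ⟨w, hw, rfl⟩; exact hzs_mem.2 w hw⟩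
  set S := (f₀ x ⬝ᵥ ·) '' ((ZA : Set (Fin d → ℝ)) \ Zstar ZA f₀ x)
  have hS_fin : S.Finite := ZA.finite_toSet.sdiff.image _
  obtain ⟨w, hw, hw_eq⟩ : sInf S ∈ S := Nonempty.csInf_mem ⟨_, z, hz_sub, rfl⟩ hS_fin
  have hw_ne : w ≠ zs := fun h => hw.2 (h ▸ hzs_mem)
  have hgap := dotProduct_lt_of_Zstar_eq_singleton hzs (subset_convexHull ℝ _ hw.1) hw_ne
  have hle : sInf S ≤ f₀ x ⬝ᵥ z := csInf_le hS_fin.bddBelow ⟨z, hz_sub, rfl⟩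
  rw [Delta, if_pos hZstar_ne, hopt, dotProduct_sub]
  constructor <;> linarith

end Zstar

lemma abs_dotProduct_le {ι : Type*} [Fintype ι] (a b : ι → ℝ) :
    |a ⬝ᵥ b| ≤ Fintype.card ι * (‖a‖ * ‖b‖) := by
  calc |a ⬝ᵥ b| ≤ ∑ i, |a i| * |b i| :=
        (Finset.abs_sum_le_sum_abs _ _).trans_eq (by simp only [abs_mul])
    _ ≤ ∑ _i : ι, ‖a‖ * ‖b‖ := by
        gcongr with i
        · exact norm_le_pi_norm a i
        · exact norm_le_pi_norm b i
    _ = Fintype.card ι * (‖a‖ * ‖b‖) := by simp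

lemma norm_le_of_mem_convexHull {E : Type*} [NormedAddCommGroup E] [NormedSpace ℝ E]
    {s : Set E} {B : ℝ} (hs : ∀ w ∈ s, ‖w‖ ≤ B) {z : E} (hz : z ∈ convexHull ℝ s) :
    ‖z‖ ≤ B := by
  obtain ⟨w, hw, hdist⟩ := convexHull_exists_dist_ge hz 0
  simpa using hdist.trans (by simpa using hs w hw)

lemma margin_markov_balance {α γ R : ℝ} (hα : 0 ≤ α) (hγ : 0 ≤ γ) (hR : 0 < R) :
    (γ * R ^ (1 + α)⁻¹) ^ α + R / R ^ (1 + α)⁻¹ = (γ ^ α + 1) * R ^ (α / (1 + α)) := by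
  have h1α : (1 + α) ≠ 0 := by positivity
  have hfirst : (R ^ (1 + α)⁻¹) ^ α = R ^ (α / (1 + α)) := by
    rw [← Real.rpow_mul hR.le, inv_mul_eq_div]
  have hsecond : R / R ^ (1 + α)⁻¹ = R ^ (α / (1 + α)) := by
    nth_rewrite 1 [← Real.rpow_one R]
    rw [← Real.rpow_sub hR]
    congr 1
    field_simp
    ring
  rw [Real.mul_rpow hγ (by positivity), hfirst, hsecond]
  ring

section MarginCondition

variable {Ω : Type*} [MeasurableSpace Ω] {μ : Measure Ω} {E : Set Ω} {Δ g : Ω → ℝ}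

lemma measure_eq_zero_of_integral_eq_zero (hg : Integrable g μ) (hg0 : 0 ≤ᵐ[μ] g)
    (hE : ∀ᵐ ω ∂μ, ω ∈ E → 0 < g ω) (h : ∫ ω, g ω ∂μ = 0) : μ E = 0 := by
  have hg_zero : g =ᵐ[μ] 0 := (integral_eq_zero_iff_of_nonneg_ae hg0 hg).1 h
  refine measure_eq_zero_iff_ae_notMem.2 ?_
  filter_upwards [hE, hg_zero] with ω hpos hzero hω
  exact (hpos hω).ne' hzero

variable [IsFiniteMeasure μ]

lemma measureReal_le_margin_add_integral_div (hg : Integrable g μ) (hg0 : 0 ≤ᵐ[μ] g)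
    (hE : ∀ᵐ ω ∂μ, ω ∈ E → Δ ω ∈ Ioc 0 (g ω)) {δ : ℝ} (hδ : 0 < δ) :
    μ.real E ≤ μ.real {ω | 0 < Δ ω ∧ Δ ω ≤ δ} + (∫ ω, g ω ∂μ) / δ := by
  have hcover : E ≤ᵐ[μ] ({ω | 0 < Δ ω ∧ Δ ω ≤ δ} ∪ {ω | δ ≤ g ω} : Set Ω) := by
    filter_upwards [hE] with ω hω hωE
    obtain ⟨hpos, hle⟩ := hω hωE
    rcases le_or_gt (Δ ω) δ with h | h
    · exact Or.inl ⟨hpos, h⟩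
    · exact Or.inr (h.le.trans hle)
  have hmarkov : μ.real {ω | δ ≤ g ω} ≤ (∫ ω, g ω ∂μ) / δ := by
    rw [le_div_iff₀ hδ, mul_comm]
    exact mul_meas_ge_le_integral_of_nonneg hg0 hg δ
  calc μ.real E ≤ μ.real ({ω | 0 < Δ ω ∧ Δ ω ≤ δ} ∪ {ω | δ ≤ g ω}) :=
        ENNReal.toReal_mono (measure_ne_top _ _) (measure_mono_ae hcover)
    _ ≤ μ.real {ω | 0 < Δ ω ∧ Δ ω ≤ δ} + μ.real {ω | δ ≤ g ω} := measureReal_union_le _ _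
    _ ≤ μ.real {ω | 0 < Δ ω ∧ Δ ω ≤ δ} + (∫ ω, g ω ∂μ) / δ := by gcongr

theorem measureReal_le_of_margin {α γ B : ℝ} (hα : 0 ≤ α) (hγ : 0 ≤ γ) (hB : 0 < B)
    (hg : Integrable g μ) (hg0 : 0 ≤ᵐ[μ] g) (hE : ∀ᵐ ω ∂μ, ω ∈ E → Δ ω ∈ Ioc 0 (g ω))
    (hmargin : ∀ δ : ℝ, 0 < δ →
      μ {ω | 0 < Δ ω ∧ Δ ω ≤ δ} ≤ ENNReal.ofReal ((γ * δ / B) ^ α)) :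
    μ.real E ≤ (γ ^ α + 1) * ((∫ ω, g ω ∂μ) / B) ^ (α / (1 + α)) := by
  rcases (integral_nonneg_of_ae hg0).eq_or_lt with hzero | hpos
  · have hE_pos : ∀ᵐ ω ∂μ, ω ∈ E → 0 < g ω := by
      filter_upwards [hE] with ω hω hωE
      exact (hω hωE).1.trans_le (hω hωE).2
    rw [measureReal_def, measure_eq_zero_of_integral_eq_zero hg hg0 hE_pos hzero.symm,
      ENNReal.toReal_zero, ← hzero, zero_div]
    positivity
  set R := (∫ ω, g ω ∂μ) / B
  have hR : 0 < R := div_pos hpos hB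
  set t := R ^ (1 + α)⁻¹
  have ht : 0 < t := Real.rpow_pos_of_pos hR _
  have hδ : 0 < B * t := mul_pos hB ht
  calc μ.real E ≤ μ.real {ω | 0 < Δ ω ∧ Δ ω ≤ B * t} + (∫ ω, g ω ∂μ) / (B * t) :=
        measureReal_le_margin_add_integral_div hg hg0 hE hδ
    _ ≤ (γ * (B * t) / B) ^ α + (∫ ω, g ω ∂μ) / (B * t) := by
        gcongr
        exact ENNReal.toReal_le_of_le_ofReal (by positivity) (hmargin _ hδ)
    _ = (γ * t) ^ α + R / t := by
        rw [show γ * (B * t) / B = γ * t by field_simp, div_mul_eq_div_div]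
    _ = (γ ^ α + 1) * R ^ (α / (1 + α)) := margin_markov_balance hα hγ hR

end MarginCondition

/-- Lemma C.3: for every `α ≥ 0` and `γ ≥ 0` there is a constant `C̃(α, γ) > 0` such that,
whenever the margin condition with parameters `α, γ` holds and `𝒵*(X)` is a.s. the
singleton `{π_{f₀}(X)}`, every measurable policy `π` taking values in the vertex set
satisfies `P(π(X) ≠ π_{f₀}(X)) ≤ C̃(α, γ) · (Reg(π) / B) ^ (α / (1 + α))`. -/
theorem stmt16 (α γ : ℝ) (hα : 0 ≤ α) (hγ : 0 ≤ γ) :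
    ∃ Ctil : ℝ, 0 < Ctil ∧
      ∀ (p d : ℕ) (ZA : Finset (Fin d → ℝ)) (B : ℝ), 0 < B → ZA.Nonempty →
      (∀ w ∈ ZA, ‖w‖ ≤ B) →
      ∀ (Ω : Type) (_ : MeasurableSpace Ω) (μ : Measure Ω), IsProbabilityMeasure μ →
      ∀ X : Ω → Fin p → ℝ, Measurable X →
      ∀ f₀ : (Fin p → ℝ) → Fin d → ℝ, Measurable f₀ → (∀ x, ‖f₀ x‖ ≤ 1) →
      (∀ δ : ℝ, 0 < δ →
        μ {ω | 0 < Delta ZA f₀ (X ω) ∧ Delta ZA f₀ (X ω) ≤ δ} ≤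
          ENNReal.ofReal ((γ * δ / B) ^ α)) →
      ∀ πstar : (Fin p → ℝ) → Fin d → ℝ, Measurable πstar →
      (∀ᵐ ω ∂μ, Zstar ZA f₀ (X ω) = {πstar (X ω)}) →
      ∀ π : (Fin p → ℝ) → Fin d → ℝ, Measurable π → (∀ x, π x ∈ ZA) →
      (μ {ω | π (X ω) ≠ πstar (X ω)}).toReal ≤
        Ctil * ((∫ ω, f₀ (X ω) ⬝ᵥ (π (X ω) - πstar (X ω)) ∂μ) / B) ^ (α / (1 + α)) := by
  refine ⟨γ ^ α + 1, by positivity, ?_⟩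
  intro p d ZA B hB _ hZA_norm Ω _ μ _ X hX f₀ hf₀ hf₀_norm hmargin πstar hπstar hZstar π hπ hπ_mem
  have hπstar_mem : ∀ᵐ ω ∂μ, πstar (X ω) ∈ Zstar ZA f₀ (X ω) := by
    filter_upwards [hZstar] with ω hω
    exact hω ▸ rfl
  have hg : Integrable (fun ω => f₀ (X ω) ⬝ᵥ (π (X ω) - πstar (X ω))) μ := by
    refine .of_bound (by fun_prop) (d * (1 * (B + B))) ?_
    filter_upwards [hπstar_mem] with ω hω
    refine (abs_dotProduct_le _ _).trans ?_
    rw [Fintype.card_fin]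
    gcongr
    · exact hf₀_norm _
    · exact (norm_sub_le _ _).trans (add_le_add (hZA_norm _ (hπ_mem _))
        (norm_le_of_mem_convexHull hZA_norm hω.1))
  refine measureReal_le_of_margin hα hγ hB hg ?_ ?_ hmargin
  · filter_upwards [hπstar_mem] with ω hω
    rw [Pi.zero_apply, dotProduct_sub, sub_nonneg]
    exact dotProduct_le_of_mem_Zstar hω (hπ_mem _)
  · filter_upwards [hZstar] with ω hω hne
    exact Delta_mem_Ioc_of_Zstar_eq_singleton hω (hπ_mem _) hne
end
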